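/- arXiv:1004.3970 — 13 statements merged into one kernel-verified Lean document; each statement's English description precedes it below -/
import Mathlib

section
/- For every positive integer n and nonnegative integers k and m, the sum over i from 0 to n of (-1)^i * C(n,i) * C(2n-2i+m, n+k) equals 2^(n-k) times the sum over i from 0 to m of 2^i * C(m,i) * C(n, k-i). -/
/-!
Since `(1 + X)^2 - 1 = X (X + 2)`, the binomial theorem gives
`∑ᵢ (-1)^i C(n,i) (1 + X)^(2(n-i)+m) = X^n (X + 2)^n (1 + X)^m`.
The coefficient of `X^(n+k)` on the left is the alternating sum; on the right it is the
coefficient of `X^k` in `(X + 2)^n (1 + X)^m`, namely `∑ⱼ 2^(n-k+j) C(n,k-j) C(m,j)`.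
-/

open Polynomial Finset

theorem sub_one_pow_eq_sum {R : Type*} [CommRing R] (a : R) (n : ℕ) :
    (a - 1) ^ n = ∑ i ∈ range (n + 1), (-1) ^ i * n.choose i * a ^ (n - i) := by
  rw [sub_eq_neg_add, add_pow]
  exact sum_congr rfl fun i _ ↦ by ring

theorem sum_neg_one_pow_mul_choose_mul_one_add_X_pow (R : Type*) [CommRing R] (n m : ℕ) :
    ∑ i ∈ range (n + 1), C ((-1) ^ i * n.choose i : R) * (1 + X) ^ (2 * (n - i) + m) =
      X ^ n * ((X + C 2) ^ n * (1 + X) ^ m) := by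
  have hsquare : ((1 + X : R[X]) ^ 2 - 1) = X * (X + C 2) := by
    rw [C_ofNat]; ring
  calc _ = ((1 + X : R[X]) ^ 2 - 1) ^ n * (1 + X) ^ m := by
        simp only [sub_one_pow_eq_sum, sum_mul, pow_add, pow_mul]
        refine sum_congr rfl fun i _ ↦ ?_
        simp only [map_mul, map_pow, map_neg, map_one, map_natCast]
        ring
    _ = _ := by rw [hsquare, mul_pow, mul_assoc]

theorem coeff_mul_eq_sum_range_of_natDegree_le {R : Type*} [CommSemiring R] {Q : R[X]} {m : ℕ}
    (hQ : Q.natDegree ≤ m) (P : R[X]) (k : ℕ) :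
    (P * Q).coeff k = ∑ j ∈ range (m + 1), if j ≤ k then P.coeff (k - j) * Q.coeff j else 0 := by
  rw [mul_comm, coeff_mul,
    Nat.sum_antidiagonal_eq_sum_range_succ (fun a b ↦ Q.coeff a * P.coeff b), ← sum_filter]
  symm
  refine sum_subset_zero_on_sdiff (fun j ↦ by simp only [mem_filter, mem_range]; omega) ?_
    (fun j _ ↦ mul_comm _ _)
  intro j hj
  simp only [mem_sdiff, mem_filter, mem_range, not_and, not_le] at hj
  rw [coeff_eq_zero_of_natDegree_lt (by omega), zero_mul]

theorem pow_sub_mul_choose_eq_zpow {K : Type*} [DivisionRing K] (r : K) (n i : ℕ) :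
    r ^ (n - i) * n.choose i = r ^ ((n : ℤ) - i) * n.choose i := by
  rcases le_or_gt i n with hi | hi
  · rw [← Nat.cast_sub hi, zpow_natCast]
  · simp [Nat.choose_eq_zero_of_lt hi]

theorem stmt0_general (n k m : ℕ) :
    ∑ i ∈ Finset.range (n + 1),
        ((-1 : ℚ) ^ i * (n.choose i) * ((2 * n - 2 * i + m).choose (n + k))) =
      (2 : ℚ) ^ ((n : ℤ) - (k : ℤ)) *
        ∑ i ∈ Finset.range (m + 1),
          (2 : ℚ) ^ i * (m.choose i) *
            (if i ≤ k then ((n.choose (k - i) : ℚ)) else 0) := by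
  have hcoeff := congrArg (coeff · (n + k)) (sum_neg_one_pow_mul_choose_mul_one_add_X_pow ℚ n m)
  have hdeg : ((1 + X : ℚ[X]) ^ m).natDegree ≤ m := by compute_degree!
  simp only [finsetSum_coeff, coeff_C_mul, coeff_one_add_X_pow, add_comm n k, coeff_X_pow_mul,
    coeff_mul_eq_sum_range_of_natDegree_le hdeg, coeff_X_add_C_pow] at hcoeff
  simp only [← Nat.mul_sub, add_comm n k, hcoeff, mul_sum]
  refine sum_congr rfl fun j _ ↦ ?_
  split_ifs with hjk
  · rw [pow_sub_mul_choose_eq_zpow, Nat.cast_sub hjk,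
      show (n : ℤ) - (k - j) = n - k + j by ring, zpow_add₀ two_ne_zero, zpow_natCast]
    ring
  · simp

/-- For every positive integer `n` and nonnegative integers `k`, `m`,
`∑_{i=0}^n (-1)^i C(n,i) C(2n-2i+m, n+k) = 2^(n-k) ∑_{i=0}^m 2^i C(m,i) C(n,k-i)`,
where `C(n,j) = 0` for `j < 0` and the power `2^(n-k)` is taken in `ℚ`
(with integer exponent `n - k`). -/
theorem stmt0 (n k m : ℕ) (hn : 0 < n) :
    ∑ i ∈ Finset.range (n + 1),
        ((-1 : ℚ) ^ i * (n.choose i) * ((2 * n - 2 * i + m).choose (n + k))) =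
      (2 : ℚ) ^ ((n : ℤ) - (k : ℤ)) *
        ∑ i ∈ Finset.range (m + 1),
          (2 : ℚ) ^ i * (m.choose i) *
            (if i ≤ k then ((n.choose (k - i) : ℚ)) else 0) :=
  stmt0_general n k m
end

section
/- For a positive integer n and nonnegative integer k, the sum over i from 0 to n of (-1)^i * C(n,i) * C(2n-2i+1, n+k) equals 2^(n-k) * (C(n,k) + 2*C(n,k-1)). -/
/-!
Both sides are coefficients of `X ^ (n + k)` in one polynomial: by the binomial theorem,
`∑ i, (-1)^i C(n,i) (1 + X)^(2(n-i)+1) = (1 + X) ((1 + X)^2 - 1)^n = X^n (1 + X) (X + 2)^n`,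
and the coefficient of `X^k` in `(1 + X) (X + 2)^n` is `2^(n-k) C(n,k) + 2^(n-k+1) C(n,k-1)`.
-/

open Polynomial Finset

theorem sum_range_neg_one_pow_mul_choose_mul_one_add_X_pow {R : Type*} [CommRing R] (n : ℕ) :
    ∑ i ∈ range (n + 1), C ((-1 : R) ^ i * n.choose i) * (1 + X) ^ (2 * n - 2 * i + 1) =
      X ^ n * ((1 + X) * (X + C 2) ^ n) := by
  have hsq : (-1 : R[X]) + (1 + X) ^ 2 = X * (X + C 2) := by
    rw [show (C 2 : R[X]) = 2 from map_ofNat C 2]; ring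
  calc ∑ i ∈ range (n + 1), C ((-1 : R) ^ i * n.choose i) * (1 + X) ^ (2 * n - 2 * i + 1)
      = (1 + X) * ∑ i ∈ range (n + 1),
          (-1 : R[X]) ^ i * ((1 + X) ^ 2) ^ (n - i) * (n.choose i : R[X]) := by
        rw [mul_sum]
        refine sum_congr rfl fun i hi => ?_
        rw [show 2 * n - 2 * i + 1 = 2 * (n - i) + 1 by have := mem_range.mp hi; omega]
        simp only [C_mul, C_pow, C_neg, C_1, map_natCast, pow_succ, pow_mul]
        ring
    _ = (1 + X) * (X * (X + C 2)) ^ n := by rw [← add_pow, hsq]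
    _ = X ^ n * ((1 + X) * (X + C 2) ^ n) := by rw [mul_pow]; ring

theorem coeff_one_add_X_mul_X_add_C_pow {R : Type*} [CommSemiring R] (a : R) (n k : ℕ) :
    ((1 + X) * (X + C a) ^ n).coeff k =
      a ^ (n - k) * n.choose k + if 1 ≤ k then a ^ (n - (k - 1)) * n.choose (k - 1) else 0 := by
  rw [add_mul, one_mul, coeff_add, coeff_X_add_C_pow]
  cases k with
  | zero => simp
  | succ j => simp [coeff_X_mul, coeff_X_add_C_pow]

theorem zpow_natCast_sub_mul_choose {K : Type*} [DivisionRing K] (a : K) (n k : ℕ) :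
    a ^ ((n : ℤ) - k) * n.choose k = a ^ (n - k) * n.choose k := by
  rcases le_or_gt k n with hkn | hnk
  · rw [← Nat.cast_sub hkn, zpow_natCast]
  · simp [Nat.choose_eq_zero_of_lt hnk]

theorem zpow_natCast_sub_succ_mul_choose {K : Type*} [DivisionRing K] {a : K} (ha : a ≠ 0)
    (n k : ℕ) : a ^ ((n : ℤ) - (k + 1 : ℕ)) * (a * n.choose k) = a ^ (n - k) * n.choose k := by
  rw [← mul_assoc, ← zpow_add_one₀ ha, Nat.cast_succ, sub_add_eq_sub_sub, sub_add_cancel,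
    zpow_natCast_sub_mul_choose]

theorem stmt4_general (n k : ℕ) :
    ∑ i ∈ Finset.range (n + 1),
        ((-1 : ℚ) ^ i * (n.choose i) * ((2 * n - 2 * i + 1).choose (n + k))) =
      (2 : ℚ) ^ ((n : ℤ) - (k : ℤ)) *
        ((n.choose k : ℚ) + 2 * (if 1 ≤ k then ((n.choose (k - 1) : ℚ)) else 0)) := by
  have hcoeff := congrArg (coeff · (n + k))
    (sum_range_neg_one_pow_mul_choose_mul_one_add_X_pow (R := ℚ) n)
  simp only [finsetSum_coeff, coeff_C_mul, coeff_one_add_X_pow, add_comm n k, coeff_X_pow_mul,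
    coeff_one_add_X_mul_X_add_C_pow] at hcoeff
  rw [add_comm n k, hcoeff, mul_add, zpow_natCast_sub_mul_choose]
  split_ifs with hk
  · obtain ⟨j, rfl⟩ := Nat.exists_eq_add_of_le' hk
    simpa using (zpow_natCast_sub_succ_mul_choose (two_ne_zero (α := ℚ)) n j).symm
  · simp

/-- For a positive integer `n` and nonnegative integer `k`,
`∑_{i=0}^n (-1)^i C(n,i) C(2n-2i+1, n+k) = 2^(n-k) (C(n,k) + 2 C(n,k-1))`,
where `C(n,-1) = 0` and `2^(n-k)` is taken in `ℚ` with integer exponent. -/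
theorem stmt4 (n k : ℕ) (hn : 0 < n) :
    ∑ i ∈ Finset.range (n + 1),
        ((-1 : ℚ) ^ i * (n.choose i) * ((2 * n - 2 * i + 1).choose (n + k))) =
      (2 : ℚ) ^ ((n : ℤ) - (k : ℤ)) *
        ((n.choose k : ℚ) + 2 * (if 1 ≤ k then ((n.choose (k - 1) : ℚ)) else 0)) :=
  stmt4_general n k
end

section
/- The number of sequences of length n over the alphabet {x, 1, 1|} containing exactly k occurrences of the symbol x and not ending in the symbol 1| equals 2^(n-1-k) * (C(n-1,k) + 2*C(n-1,k-1)). -/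
inductive Letter : Type
  | x : Letter
  | one : Letter
  | onebar : Letter
  deriving DecidableEq

instance : Fintype Letter :=
  ⟨{Letter.x, Letter.one, Letter.onebar}, by intro a; cases a <;> simp⟩

def cnt {m : ℕ} (f : Fin m → Letter) : ℕ := ∑ i, if f i = Letter.x then 1 else 0

lemma cnt_eq_card {m : ℕ} (f : Fin m → Letter) :
    (Finset.univ.filter (fun i : Fin m => f i = Letter.x)).card = cnt f :=
  Finset.card_filter _ _

lemma sum_letter {M : Type*} [AddCommMonoid M] (h : Letter → M) :
    ∑ a, h a = h .x + h .one + h .onebar := by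
  rw [show (Finset.univ : Finset Letter) = {Letter.x, Letter.one, Letter.onebar} from rfl]
  rw [Finset.sum_insert (by simp), Finset.sum_insert (by simp), Finset.sum_singleton, add_assoc]

def snocEquiv (m : ℕ) : ((Fin m → Letter) × Letter) ≃ (Fin (m+1) → Letter) where
  toFun p := Fin.snoc p.1 p.2
  invFun f := (Fin.init f, f (Fin.last m))
  left_inv := by rintro ⟨g, a⟩; simp
  right_inv := fun f => Fin.snoc_init_self f

lemma cnt_snoc {m : ℕ} (g : Fin m → Letter) (a : Letter) :
    cnt (Fin.snoc g a) = cnt g + (if a = Letter.x then 1 else 0) := by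
  simp only [cnt, Fin.sum_univ_castSucc, Fin.snoc_castSucc, Fin.snoc_last]

lemma card_eq_sum {m : ℕ} (p : (Fin (m+1) → Letter) → Prop) [DecidablePred p] :
    (Finset.univ.filter p).card
      = ∑ g : Fin m → Letter, ∑ a : Letter, if p (Fin.snoc g a) then 1 else 0 := by
  rw [Finset.card_filter]
  rw [← Equiv.sum_comp (snocEquiv m) (fun f => if p f then 1 else 0)]
  rw [Fintype.sum_prod_type]
  rfl

lemma countB : ∀ m j : ℕ,
    (Finset.univ.filter (fun f : Fin m → Letter => cnt f = j)).card
      = m.choose j * 2 ^ (m - j) := by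
  intro m
  induction m with
  | zero =>
      intro j
      cases j with
      | zero => simp [cnt]
      | succ j => simp [cnt, Finset.filter_eq_empty_iff, Nat.choose_eq_zero_of_lt]
  | succ m ih =>
      intro j
      rw [card_eq_sum]
      have step : ∀ g : Fin m → Letter,
          (∑ a : Letter, if cnt (Fin.snoc g a) = j then 1 else 0)
          = (if cnt g + 1 = j then 1 else 0) + 2 * (if cnt g = j then 1 else 0) := by
        intro g
        rw [sum_letter (fun a => if cnt (Fin.snoc g a) = j then 1 else 0)]
        simp [cnt_snoc]
        split_ifs <;> omega
      simp only [step]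
      rw [Finset.sum_add_distrib, ← Finset.mul_sum]
      rw [← Finset.card_filter, ← Finset.card_filter, ih j]
      cases j with
      | zero =>
          simp [pow_succ]
          ring
      | succ j =>
          have h1 : (Finset.univ.filter (fun g : Fin m → Letter => cnt g + 1 = j + 1)).card
              = m.choose j * 2 ^ (m - j) := by
            rw [← ih j]; congr 1; ext g; simp
          rw [h1, Nat.choose_succ_succ, Nat.succ_sub_succ]
          rcases le_or_gt (j+1) m with h | h
          · have : m - j = m - (j+1) + 1 := by omega
            rw [this, pow_succ]
            ring
          · rw [Nat.choose_eq_zero_of_lt h]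
            have : m - j = m - (j+1) := by omega
            rw [this]
            ring

/-- The number of sequences of length `n` over `{x, 1, 1|}` with exactly `k`
occurrences of `x` and not ending in `1|` is
`2^(n-1-k) (C(n-1,k) + 2 C(n-1,k-1))`, where `C(m,-1)=0` and the power is
taken in `ℚ` with integer exponent `n - 1 - k`. -/
theorem stmt5 (n k : ℕ) (hn : 0 < n) (hk : k ≤ n) :
    ((Finset.univ.filter (fun f : Fin n → Letter =>
        (Finset.univ.filter (fun i : Fin n => f i = Letter.x)).card = k ∧
          f ⟨n - 1, Nat.sub_lt hn one_pos⟩ ≠ Letter.onebar)).card : ℚ) =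
      (2 : ℚ) ^ ((n : ℤ) - 1 - (k : ℤ)) *
        (((n - 1).choose k : ℚ) +
          2 * (if 1 ≤ k then (((n - 1).choose (k - 1) : ℚ)) else 0)) := by
  obtain ⟨m, rfl⟩ : ∃ m, n = m + 1 := ⟨n - 1, by omega⟩
  have hk' : k ≤ m + 1 := hk
  have key : (Finset.univ.filter (fun f : Fin (m+1) → Letter =>
        (Finset.univ.filter (fun i : Fin (m+1) => f i = Letter.x)).card = k ∧
          f ⟨m + 1 - 1, Nat.sub_lt hn one_pos⟩ ≠ Letter.onebar)).card
      = (Finset.univ.filter (fun g : Fin m → Letter => cnt g + 1 = k)).card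
        + (Finset.univ.filter (fun g : Fin m → Letter => cnt g = k)).card := by
    have hpred : (Finset.univ.filter (fun f : Fin (m+1) → Letter =>
        (Finset.univ.filter (fun i : Fin (m+1) => f i = Letter.x)).card = k ∧
          f ⟨m + 1 - 1, Nat.sub_lt hn one_pos⟩ ≠ Letter.onebar)).card
        = (Finset.univ.filter (fun f : Fin (m+1) → Letter =>
            cnt f = k ∧ f (Fin.last m) ≠ Letter.onebar)).card := by
      congr 1
      ext f
      simp only [Finset.mem_filter, Finset.mem_univ, true_and, cnt_eq_card]
      exact Iff.rfl
    rw [hpred, card_eq_sum]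
    have term : ∀ g : Fin m → Letter,
        (∑ a : Letter, if (cnt (Fin.snoc g a) = k ∧
            (Fin.snoc g a : Fin (m+1) → Letter) (Fin.last m) ≠ Letter.onebar) then (1:ℕ) else 0)
        = (if cnt g + 1 = k then 1 else 0) + (if cnt g = k then 1 else 0) := by
      intro g
      rw [sum_letter (M := ℕ) (fun a => if (cnt (Fin.snoc g a) = k ∧
            (Fin.snoc g a : Fin (m+1) → Letter) (Fin.last m) ≠ Letter.onebar) then (1:ℕ) else 0)]
      simp [cnt_snoc, Fin.snoc_last]
    simp only [term]
    rw [Finset.sum_add_distrib, ← Finset.card_filter, ← Finset.card_filter]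
  rw [key]
  rcases Nat.eq_zero_or_pos k with rfl | hk1
  · have h1 : (Finset.univ.filter (fun g : Fin m → Letter => cnt g + 1 = 0)).card = 0 := by
      simp
    rw [h1, countB m 0]
    push_cast
    rw [show (m : ℤ) + 1 - 1 - 0 = (m : ℕ) from by push_cast; ring, zpow_natCast]
    simp
  · have h1 : (Finset.univ.filter (fun g : Fin m → Letter => cnt g + 1 = k)).card
        = m.choose (k-1) * 2 ^ (m - (k-1)) := by
      rw [← countB m (k-1)]; congr 1; ext g
      simp only [Finset.mem_filter, Finset.mem_univ, true_and]
      clear key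
      omega
    rw [h1, countB m k, if_pos (show 1 ≤ k from hk1)]
    rcases le_or_gt k m with h | h
    · have e1 : m - (k-1) = (m - k) + 1 := by clear key h1; omega
      rw [e1]
      have e2 : (((m+1 : ℕ) : ℤ) - 1 - k) = ((m - k : ℕ) : ℤ) := by
        push_cast [Nat.cast_sub h]; ring
      rw [e2, zpow_natCast]
      push_cast
      ring
    · have hkm : k = m + 1 := by clear key h1; omega
      subst hkm
      simp only [Nat.add_sub_cancel]
      rw [Nat.choose_eq_zero_of_lt (Nat.lt_succ_self m), Nat.choose_self, Nat.sub_self,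
        show (((m+1:ℕ)):ℤ)-1-(((m+1:ℕ)):ℤ) = -1 from by push_cast; ring]
      norm_num
end

section
/- Let c(n,p) be the number of compositions of n with all parts ≥ p, with c(0,p)=1, and let c(n,k,p,p-1) be the number of compositions of n with exactly k parts equal to p-1 and all other parts ≥ p. Then for positive integers n, p and nonnegative integer k: c(n+kp+1, k, p, p-1) = sum over all tuples (j_1,...,j_{k+1}) of integers ≥ -1 with j_1+...+j_{k+1} = n of the product c(j_1+1,p) * c(j_2+1,p) * ... * c(j_{k+1}+1,p). -/
/-!
Cutting a composition counted by `cc (n + k * p + 1) k p` at its `k` parts equal to `p - 1`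
leaves `k + 1` (possibly empty) compositions with all parts `≥ p`, of total
`n + k * p + 1 - k * (p - 1) = n + k + 1`; conversely, any such `(k + 1)`-tuple glued back with
`p - 1` in between gives back the composition. Sorting the tuples by their vector of sums
`f` yields the sum of products `∏ₜ c (f t) p`.
-/

/-- `c n p`: the number of compositions of `n` all of whose parts are `≥ p`
(for `p ≥ 1` all parts are automatically positive); `c 0 p = 1` (the empty
composition). -/
noncomputable def c (n p : ℕ) : ℕ :=
  Nat.card {l : List ℕ // (∀ x ∈ l, p ≤ x) ∧ l.sum = n}

/-- `cc n k p`: the number of compositions of `n` with exactly `k` parts equal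
to `p - 1` and all other parts `≥ p`. -/
noncomputable def cc (n k p : ℕ) : ℕ :=
  Nat.card {l : List ℕ // l.sum = n ∧ l.count (p - 1) = k ∧
      ∀ x ∈ l, x = p - 1 ∨ p ≤ x}

namespace List

variable {α : Type*}

theorem intercalate_cons_eq_append_flatten (sep a : List α) (L : List (List α)) :
    sep.intercalate (a :: L) = a ++ (L.map (sep ++ ·)).flatten := by
  induction L generalizing a with
  | nil => simp
  | cons b L ih => rw [intercalate_cons_cons, ih]; simp

theorem sum_intercalate_singleton_cons [AddCommMonoid α] (x : α) (a : List α)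
    (L : List (List α)) :
    ([x].intercalate (a :: L)).sum = ((a :: L).map sum).sum + L.length • x := by
  simp only [intercalate_cons_eq_append_flatten, sum_append, sum_flatten, map_map,
    Function.comp_def, cons_append, nil_append, sum_cons, sum_map_add, map_const', sum_replicate,
    map_cons]
  abel

theorem forall_mem_intercalate_singleton {P : α → Prop} {x : α} {L : List (List α)}
    (hL : ∀ m ∈ L, ∀ y ∈ m, P y) : ∀ y ∈ [x].intercalate L, y = x ∨ P y := by
  cases L with
  | nil => simp
  | cons a L =>
    simp only [intercalate_cons_eq_append_flatten, mem_append, mem_flatten, mem_map,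
      exists_exists_and_eq_and, mem_singleton]
    rintro y (hy | ⟨m, hm, rfl | hy⟩)
    · exact Or.inr (hL a mem_cons_self y hy)
    · exact Or.inl rfl
    · exact Or.inr (hL m (mem_cons_of_mem a hm) y hy)

variable [DecidableEq α]

theorem count_intercalate_singleton_cons {x : α} {a : List α} {L : List (List α)}
    (h : ∀ m ∈ a :: L, x ∉ m) : ([x].intercalate (a :: L)).count x = L.length := by
  simp only [forall_mem_cons] at h
  have hL : (L.map (count x)).sum = 0 :=
    sum_eq_zero (by simpa using fun m hm => count_eq_zero.2 (h.2 m hm))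
  simp [intercalate_cons_eq_append_flatten, count_flatten, Function.comp_def,
    count_eq_zero.2 h.1, hL]

theorem mem_of_mem_of_mem_splitOn {x y : α} {l m : List α} (hm : m ∈ l.splitOn x)
    (hy : y ∈ m) : y ∈ l := by
  obtain ⟨a, L, hL⟩ := exists_cons_of_ne_nil (splitOn_ne_nil x l)
  rw [← intercalate_splitOn x (xs := l), hL, intercalate_cons_eq_append_flatten]
  rw [hL] at hm
  simp only [mem_cons] at hm
  rcases hm with rfl | hm
  · simp [hy]
  · simp only [mem_append, mem_flatten, mem_map]
    exact Or.inr ⟨_, ⟨m, hm, rfl⟩, mem_append_right _ hy⟩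

theorem not_mem_of_mem_splitOn {x : α} {l m : List α} (hm : m ∈ l.splitOn x) : x ∉ m := by
  induction l generalizing m with
  | nil => simp_all
  | cons a l ih =>
    rw [splitOn_cons_eq_if_modifyHead] at hm
    obtain ⟨b, L, hL⟩ := exists_cons_of_ne_nil (splitOn_ne_nil x l)
    rw [hL] at hm ih
    split_ifs at hm with h
    · rcases mem_cons.1 hm with rfl | hm
      · simp
      · exact ih hm
    · simp only [modifyHead_cons, mem_cons] at hm
      rcases hm with rfl | hm
      · simpa [Ne.symm (by simpa using h)] using ih mem_cons_self
      · exact ih (mem_cons_of_mem _ hm)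

theorem length_splitOn (x : α) (l : List α) : (l.splitOn x).length = l.count x + 1 := by
  obtain ⟨a, L, hL⟩ := exists_cons_of_ne_nil (splitOn_ne_nil x l)
  have hcount := count_intercalate_singleton_cons (x := x) (a := a) (L := L)
    (hL ▸ fun m hm => not_mem_of_mem_splitOn hm)
  rw [← hL, intercalate_splitOn] at hcount
  rw [hcount, hL, length_cons]

theorem forall_mem_of_mem_splitOn {P : α → Prop} {x : α} {l m : List α}
    (hl : ∀ y ∈ l, y = x ∨ P y) (hm : m ∈ l.splitOn x) : ∀ y ∈ m, P y := by
  intro y hy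
  refine (hl y (mem_of_mem_of_mem_splitOn hm hy)).resolve_left ?_
  rintro rfl
  exact not_mem_of_mem_splitOn hm hy

def splitOnEquiv (x : α) (P : α → Prop) (hx : ¬ P x) (k : ℕ) :
    {l : List α // l.count x = k ∧ ∀ y ∈ l, y = x ∨ P y} ≃
      (Fin (k + 1) → {m : List α // ∀ y ∈ m, P y}) where
  toFun l t :=
    have ht : (t : ℕ) < (l.1.splitOn x).length := by rw [length_splitOn, l.2.1]; exact t.2
    ⟨(l.1.splitOn x)[t], forall_mem_of_mem_splitOn l.2.2 (getElem_mem ht)⟩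
  invFun g := ⟨[x].intercalate (ofFn fun t => (g t).1), by
      rw [ofFn_succ, count_intercalate_singleton_cons, length_ofFn]
      simp only [mem_cons, mem_ofFn]
      rintro m (rfl | ⟨t, rfl⟩) hm
      · exact hx ((g 0).2 x hm)
      · exact hx ((g t.succ).2 x hm),
    forall_mem_intercalate_singleton <| by
      simp only [mem_ofFn]
      rintro m ⟨t, rfl⟩
      exact (g t).2⟩
  left_inv l := by
    apply Subtype.ext
    have hpieces : ofFn (fun t : Fin (k + 1) => (l.1.splitOn x)[t]'(by
        rw [length_splitOn, l.2.1]; exact t.2)) = l.1.splitOn x :=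
      ext_getElem (by simp [length_splitOn, l.2.1]) fun i _ _ => List.getElem_ofFn ..
    simp only [hpieces, intercalate_splitOn]
  right_inv g := by
    funext t
    apply Subtype.ext
    have hx' : ∀ m ∈ ofFn (fun t => (g t).1), x ∉ m := by
      simp only [mem_ofFn]
      rintro m ⟨t, rfl⟩ hm
      exact hx ((g t).2 x hm)
    exact (getElem_of_eq (splitOn_intercalate x hx' (by simp)) _).trans
      (List.getElem_ofFn ..)

theorem sum_splitOnEquiv_symm [AddCommMonoid α] (x : α) (P : α → Prop) (hx : ¬ P x) (k : ℕ)
    (g : Fin (k + 1) → {m : List α // ∀ y ∈ m, P y}) :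
    ((splitOnEquiv x P hx k).symm g).1.sum = ∑ t, (g t).1.sum + k • x := by
  change ([x].intercalate (ofFn fun t => (g t).1)).sum = _
  rw [ofFn_succ, sum_intercalate_singleton_cons, length_ofFn, map_cons,
    sum_cons, map_ofFn, sum_ofFn, Fin.sum_univ_succ]
  rfl

end List

theorem Nat.card_tuple_sum_eq {T : Type*} (w : T → ℕ) [∀ j, Finite {m // w m = j}]
    (n s : ℕ) :
    Nat.card {g : Fin n → T // ∑ t, w (g t) = s} =
      ∑ f ∈ Finset.Nat.antidiagonalTuple n s, ∏ t, Nat.card {m // w m = f t} := by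
  let weights : {g : Fin n → T // ∑ t, w (g t) = s} → Finset.Nat.antidiagonalTuple n s :=
    fun g => ⟨fun t => w (g.1 t), Finset.Nat.mem_antidiagonalTuple.2 g.2⟩
  let fiberEquiv (f : Finset.Nat.antidiagonalTuple n s) :
      {g // weights g = f} ≃ ∀ t, {m // w m = f.1 t} :=
    { toFun g t := ⟨g.1.1 t, congrFun (congrArg Subtype.val g.2) t⟩
      invFun h := ⟨⟨fun t => (h t).1, by
          simpa [(h _).2] using Finset.Nat.mem_antidiagonalTuple.1 f.2⟩,
        Subtype.ext (funext fun t => (h t).2)⟩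
      left_inv _ := rfl
      right_inv _ := rfl }
  have : ∀ f, Finite {g // weights g = f} := fun f => Finite.of_equiv _ (fiberEquiv f).symm
  rw [← Nat.card_congr (Equiv.sigmaFiberEquiv weights), Nat.card_sigma]
  simp_rw [Nat.card_congr (fiberEquiv _), Nat.card_pi]
  exact Finset.sum_coe_sort _ fun f : Fin n → ℕ => ∏ t, Nat.card {m // w m = f t}

theorem finite_compositions_parts_ge {p : ℕ} (hp : 0 < p) (j : ℕ) :
    Finite {m : {m : List ℕ // ∀ y ∈ m, p ≤ y} // m.1.sum = j} :=
  Finite.of_injective (β := Composition j)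
    (fun m => ⟨m.1.1, fun hi => hp.trans_le (m.1.2 _ hi), m.2⟩)
    (fun _ _ h => Subtype.ext (Subtype.ext (congrArg Composition.blocks h)))

theorem c_eq_card_sum_eq (j p : ℕ) :
    c j p = Nat.card {m : {m : List ℕ // ∀ y ∈ m, p ≤ y} // m.1.sum = j} :=
  Nat.card_congr (Equiv.subtypeSubtypeEquivSubtypeInter _ _).symm

theorem cc_eq_card_tuples {p : ℕ} (hp : 0 < p) (n k : ℕ) :
    cc (n + k * p + 1) k p =
      Nat.card {g : Fin (k + 1) → {m : List ℕ // ∀ y ∈ m, p ≤ y} //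
        ∑ t, (g t).1.sum = n + k + 1} := by
  have hkp : k * p = k * (p - 1) + k := by
    rw [Nat.mul_sub_one, Nat.sub_add_cancel (Nat.le_mul_of_pos_right k hp)]
  calc cc (n + k * p + 1) k p
      = Nat.card {l : {l : List ℕ // l.count (p - 1) = k ∧ ∀ y ∈ l, y = p - 1 ∨ p ≤ y}
            // l.1.sum = n + k * p + 1} :=
        Nat.card_congr ((Equiv.subtypeSubtypeEquivSubtypeInter _ _).trans
          (Equiv.subtypeEquivRight fun _ => and_comm)).symm
    _ = _ := (Nat.card_congr ((List.splitOnEquiv (p - 1) (p ≤ ·) (by omega) k).symm.subtypeEquiv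
        fun g => by rw [List.sum_splitOnEquiv_symm, smul_eq_mul]; omega)).symm

/- The paper's tuples `jₜ ≥ -1` with `∑ jₜ = n` appear here as `f t = jₜ + 1`. -/
theorem stmt8_general (n p k : ℕ) (hp : 0 < p) :
    cc (n + k * p + 1) k p =
      ∑ f ∈ Finset.Nat.antidiagonalTuple (k + 1) (n + k + 1),
        ∏ t : Fin (k + 1), c (f t) p := by
  have := finite_compositions_parts_ge hp
  simp only [cc_eq_card_tuples hp, c_eq_card_sum_eq]
  exact Nat.card_tuple_sum_eq (fun m : {m : List ℕ // ∀ y ∈ m, p ≤ y} => m.1.sum) _ _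

/-- `c(n+kp+1, k, p, p-1) = ∑ c(j₁+1,p) ⋯ c(j_{k+1}+1,p)` over all tuples of
integers `jₜ ≥ -1` with `j₁ + ⋯ + j_{k+1} = n`.  Substituting `fₜ = jₜ + 1 ≥ 0`,
the tuples are exactly those `f : Fin (k+1) → ℕ` with `∑ f = n + k + 1`. -/
theorem stmt8 (n p k : ℕ) (hn : 0 < n) (hp : 0 < p) :
    cc (n + k * p + 1) k p =
      ∑ f ∈ Finset.Nat.antidiagonalTuple (k + 1) (n + k + 1),
        ∏ t : Fin (k + 1), c (f t) p :=
  stmt8_general n p k hp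
end

section
/- For a positive integer n and nonnegative integer k, the number of compositions of n+2k+1 with exactly k parts equal to 1 and all other parts ≥ 2 equals the sum over all tuples (j_1,...,j_{k+1}) of integers ≥ -1 with j_1+...+j_{k+1} = n of the product f_{j_1} * f_{j_2} * ... * f_{j_{k+1}}, where f_s = c(s+1,2) denotes the number of compositions of s+1 with all parts ≥ 2, with c(0,2)=1. -/
/-- `c2 m`: the number of compositions of `m` with all parts `≥ 2`
(`c2 0 = 1`, the empty composition).  These numbers satisfy the Fibonacci
recurrence, and `f_s := c2 (s+1)` are the Fibonacci numbers of the paper. -/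
noncomputable def c2 (m : ℕ) : ℕ :=
  Nat.card {l : List ℕ // (∀ x ∈ l, 2 ≤ x) ∧ l.sum = m}

section Aux

open List Finset

abbrev CC (m : ℕ) := {l : List ℕ // (∀ x ∈ l, 2 ≤ x) ∧ l.sum = m}
abbrev TT (k m : ℕ) := {l : List ℕ // l.sum = m ∧ l.count 1 = k ∧ ∀ x ∈ l, x = 1 ∨ 2 ≤ x}

lemma listFinite {m : ℕ} (P : List ℕ → Prop)
    (h : ∀ l, P l → (∀ x ∈ l, 0 < x) ∧ l.sum = m) : Finite {l : List ℕ // P l} := by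
  apply Finite.of_injective (fun x : {l : List ℕ // P l} =>
    (⟨x.1, fun hi => (h x.1 x.2).1 _ hi, (h x.1 x.2).2⟩ : Composition m))
  intro a b hab
  exact Subtype.ext (congrArg Composition.blocks hab)

instance (m : ℕ) : Finite (CC m) :=
  listFinite _ (fun l hl => ⟨fun x hx => by have := hl.1 x hx; omega, hl.2⟩)

instance (k m : ℕ) : Finite (TT k m) :=
  listFinite _ (fun l hl => ⟨fun x hx => by rcases hl.2.2 x hx with h | h <;> omega, hl.1⟩)

lemma count_one_le_sum (l : List ℕ) : l.count 1 ≤ l.sum := by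
  induction l with
  | nil => simp
  | cons a t ih => by_cases h : a = 1 <;> simp [List.count_cons, h] <;> omega

lemma TT_empty {k m : ℕ} (h : m < k) : Nat.card (TT k m) = 0 := by
  have : IsEmpty (TT k m) := by
    constructor; rintro ⟨l, hs, hc, -⟩
    have := count_one_le_sum l; omega
  simp

lemma split_spec (A B : List ℕ) (hA : ∀ x ∈ A, x ≠ 1) :
    (A ++ 1 :: B).takeWhile (fun x => decide (x ≠ 1)) = A ∧
    (A ++ 1 :: B).dropWhile (fun x => decide (x ≠ 1)) = 1 :: B := by
  induction A with
  | nil => simp [List.takeWhile, List.dropWhile]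
  | cons a t ih =>
    have ha : a ≠ 1 := hA a (by simp)
    have := ih (fun x hx => hA x (by simp [hx]))
    simp only [ne_eq, decide_not] at this
    simp [List.takeWhile_cons, List.dropWhile_cons, ha, this.1, this.2]

noncomputable def c2' (m : ℕ) : ℕ := Nat.card (CC m)

def stepFun (k m : ℕ) (x : Σ ab : Finset.HasAntidiagonal.antidiagonal m, CC ab.1.1 × TT k ab.1.2) :
    TT (k+1) (m+1) :=
  ⟨x.2.1.1 ++ 1 :: x.2.2.1, by
    obtain ⟨⟨⟨a, b⟩, hab⟩, ⟨A, hA2, hAs⟩, ⟨B, hBs, hBc, hBp⟩⟩ := x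
    simp only [Finset.HasAntidiagonal.mem_antidiagonal] at hab
    refine ⟨?_, ?_, ?_⟩
    · simp only [List.sum_append, List.sum_cons, hAs, hBs]; omega
    · have hA0 : A.count 1 = 0 := by
        rw [List.count_eq_zero]
        intro h1; have := hA2 1 h1; omega
      simp [List.count_append, List.count_cons, hA0, hBc]
    · intro x hx
      rcases List.mem_append.mp hx with h | h
      · exact Or.inr (hA2 x h)
      · rcases List.mem_cons.mp h with h | h
        · exact Or.inl h
        · exact hBp x h⟩

lemma stepFun_bij (k m : ℕ) : Function.Bijective (stepFun k m) := by
  constructor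
  · rintro ⟨⟨⟨a₁, b₁⟩, hab₁⟩, ⟨A₁, hA₁, hAs₁⟩, ⟨B₁, hBs₁, hBc₁, hBp₁⟩⟩
      ⟨⟨⟨a₂, b₂⟩, hab₂⟩, ⟨A₂, hA₂, hAs₂⟩, ⟨B₂, hBs₂, hBc₂, hBp₂⟩⟩ h
    simp only [stepFun, Subtype.mk.injEq] at h
    have hne₁ : ∀ x ∈ A₁, x ≠ 1 := fun x hx => by have := hA₁ x hx; omega
    have hne₂ : ∀ x ∈ A₂, x ≠ 1 := fun x hx => by have := hA₂ x hx; omega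
    have hA : A₁ = A₂ := by
      rw [← (split_spec A₁ B₁ hne₁).1, ← (split_spec A₂ B₂ hne₂).1, h]
    have hB : B₁ = B₂ := by
      have := (split_spec A₁ B₁ hne₁).2.symm.trans ((congrArg _ h).trans (split_spec A₂ B₂ hne₂).2)
      simpa using this
    subst hA; subst hB
    have ha : a₁ = a₂ := hAs₁.symm.trans hAs₂
    have hb : b₁ = b₂ := hBs₁.symm.trans hBs₂
    subst ha; subst hb; rfl
  · rintro ⟨l, hs, hc, hp⟩
    set A := l.takeWhile (fun x => decide (x ≠ 1)) with hAdef
    set D := l.dropWhile (fun x => decide (x ≠ 1)) with hDdef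
    have hDne : D ≠ [] := by
      intro h
      have h1 : (1 : ℕ) ∈ l := List.count_pos_iff.mp (by omega)
      have := List.dropWhile_eq_nil_iff.mp h 1 h1
      simp at this
    have hhead : D.head hDne = 1 := by
      have h2 := List.head_dropWhile_not (fun x => decide (x ≠ 1)) (l := l) (hDdef ▸ hDne)
      exact not_not.mp (of_decide_eq_false h2)
    set B := D.tail with hBdef
    have hDB : D = 1 :: B := by
      rw [hBdef, ← hhead]
      exact (List.cons_head_tail hDne).symm
    have hl : A ++ 1 :: B = l := by
      rw [← hDB, hAdef, hDdef, List.takeWhile_append_dropWhile]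
    have hA2 : ∀ x ∈ A, 2 ≤ x := by
      intro x hx
      have hx1 : x ≠ 1 := by simpa using List.mem_takeWhile_imp hx
      have hxl : x ∈ l := (List.takeWhile_sublist _).subset hx
      rcases hp x hxl with h | h
      · exact absurd h hx1
      · exact h
    have hBmem : ∀ x ∈ B, x ∈ l := by
      intro x hx
      rw [← hl]; exact List.mem_append.mpr (Or.inr (List.mem_cons.mpr (Or.inr hx)))
    have hA0 : A.count 1 = 0 := List.count_eq_zero.mpr (fun h => by have := hA2 1 h; omega)
    have hsum : A.sum + 1 + B.sum = m + 1 := by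
      rw [← hs, ← hl]; simp [List.sum_append]; omega
    have hcount : B.count 1 = k := by
      have : l.count 1 = A.count 1 + (1 + B.count 1) := by
        rw [← hl]; simp [List.count_append, List.count_cons]; omega
      omega
    refine ⟨⟨⟨⟨A.sum, B.sum⟩, Finset.HasAntidiagonal.mem_antidiagonal.mpr (by omega)⟩,
      ⟨A, hA2, rfl⟩, ⟨B, rfl, hcount, fun x hx => hp x (hBmem x hx)⟩⟩, ?_⟩
    exact Subtype.ext hl

lemma step_card (k m : ℕ) :
    Nat.card (TT (k+1) (m+1)) =
      ∑ ab ∈ Finset.HasAntidiagonal.antidiagonal m, c2' ab.1 * Nat.card (TT k ab.2) := by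
  rw [← Nat.card_eq_of_bijective _ (stepFun_bij k m)]
  letI : ∀ ab : Finset.HasAntidiagonal.antidiagonal m, Fintype (CC ab.1.1 × TT k ab.1.2) :=
    fun ab => Fintype.ofFinite _
  rw [Nat.card_eq_fintype_card, Fintype.card_sigma]
  rw [← Finset.sum_coe_sort (Finset.HasAntidiagonal.antidiagonal m)
    (fun ab => c2' ab.1 * Nat.card (TT k ab.2))]
  congr 1
  ext ab
  rw [← Nat.card_eq_fintype_card, Nat.card_prod]
  rfl

lemma tuple_succ (k s : ℕ) (F : ℕ → ℕ) :
    ∑ g ∈ Finset.Nat.antidiagonalTuple (k+1) s, ∏ t : Fin (k+1), F (g t) =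
      ∑ ab ∈ Finset.HasAntidiagonal.antidiagonal s, F ab.1 *
        ∑ g ∈ Finset.Nat.antidiagonalTuple k ab.2, ∏ t : Fin k, F (g t) := by
  simp_rw [Finset.mul_sum]
  rw [show (∑ x ∈ Finset.HasAntidiagonal.antidiagonal s, ∑ i ∈ Finset.Nat.antidiagonalTuple k x.2,
        F x.1 * ∏ t : Fin k, F (i t)) =
      ∑ x ∈ (Finset.HasAntidiagonal.antidiagonal s).sigma
        (fun ab => Finset.Nat.antidiagonalTuple k ab.2),
        F x.1.1 * ∏ t : Fin k, F (x.2 t) from (Finset.sum_sigma (s := Finset.HasAntidiagonal.antidiagonal s)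
        (t := fun ab => Finset.Nat.antidiagonalTuple k ab.2)
        (f := fun x => F x.1.1 * ∏ t : Fin k, F (x.2 t))).symm]
  refine Finset.sum_nbij'
    (i := fun g : Fin (k+1) → ℕ =>
      (⟨(g 0, ∑ t : Fin k, g t.succ), Fin.tail g⟩ : Σ _ : ℕ × ℕ, Fin k → ℕ))
    (j := fun x : Σ _ : ℕ × ℕ, Fin k → ℕ => Fin.cons x.1.1 x.2) ?_ ?_ ?_ ?_ ?_
  · intro g hg
    rw [Finset.Nat.mem_antidiagonalTuple] at hg
    rw [Finset.mem_sigma]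
    refine ⟨Finset.HasAntidiagonal.mem_antidiagonal.mpr ?_, Finset.Nat.mem_antidiagonalTuple.mpr rfl⟩
    rw [← hg, Fin.sum_univ_succ]
  · rintro ⟨⟨a, b⟩, g⟩ hx
    rw [Finset.mem_sigma] at hx
    obtain ⟨h1, h2⟩ := hx
    rw [Finset.HasAntidiagonal.mem_antidiagonal] at h1
    rw [Finset.Nat.mem_antidiagonalTuple] at h2 ⊢
    rw [Fin.sum_univ_succ]
    simp [Fin.cons_zero, Fin.cons_succ, h2, h1]
  · intro g _
    exact Fin.cons_self_tail g
  · rintro ⟨⟨a, b⟩, g⟩ hx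
    rw [Finset.mem_sigma] at hx
    have h2 := Finset.Nat.mem_antidiagonalTuple.mp hx.2
    simp [Fin.cons_zero, Fin.tail_cons, h2]
  · intro g _
    rw [Fin.prod_univ_succ]
    rfl

lemma key (k s : ℕ) : Nat.card (TT k (s + k)) =
    ∑ g ∈ Finset.Nat.antidiagonalTuple (k+1) s, ∏ t : Fin (k+1), c2' (g t) := by
  induction k generalizing s with
  | zero =>
    rw [Finset.Nat.antidiagonalTuple_one, Finset.sum_singleton]
    have e : TT 0 (s + 0) ≃ CC s := Equiv.subtypeEquivRight (by
      intro l
      constructor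
      · rintro ⟨hs, hc, hp⟩
        refine ⟨fun x hx => ?_, by simpa using hs⟩
        rcases hp x hx with h | h
        · exfalso; rw [List.count_eq_zero] at hc; exact hc (h ▸ hx)
        · exact h
      · rintro ⟨hp, hs⟩
        exact ⟨by simpa using hs,
          List.count_eq_zero.mpr (fun h => by have := hp 1 h; omega),
          fun x hx => Or.inr (hp x hx)⟩)
    rw [Nat.card_congr e]
    simp [c2']
  | succ k ih =>
    rw [show s + (k+1) = (s+k) + 1 by omega, step_card,
      Finset.Nat.sum_antidiagonal_eq_sum_range_succ
        (fun a b => c2' a * Nat.card (TT k b)),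
      tuple_succ (k+1) s c2',
      Finset.Nat.sum_antidiagonal_eq_sum_range_succ
        (fun a b => c2' a * ∑ g ∈ Finset.Nat.antidiagonalTuple (k+1) b,
          ∏ t : Fin (k+1), c2' (g t))]
    have hsub : Finset.range (s+1) ⊆ Finset.range (s+k+1) :=
      Finset.range_subset_range.mpr (by omega)
    rw [← Finset.sum_subset hsub (fun i hi hni => ?_)]
    · refine Finset.sum_congr rfl (fun i hi => ?_)
      rw [Finset.mem_range] at hi
      have : s + k - i = (s - i) + k := by omega
      rw [this, ih (s - i)]
    · rw [Finset.mem_range] at hi hni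
      have : s + k - i < k := by omega
      rw [TT_empty this, mul_zero]

lemma c2'_eq_c2 : c2' = c2 := rfl

end Aux

/-- The number of compositions of `n + 2k + 1` with exactly `k` parts equal to
`1` and all other parts `≥ 2` equals `∑ f_{j₁} ⋯ f_{j_{k+1}}` over all tuples
of integers `jₜ ≥ -1` with `j₁ + ⋯ + j_{k+1} = n`, where `f_s = c2 (s+1)`.
Substituting `gₜ = jₜ + 1 ≥ 0`, the tuples are exactly those
`g : Fin (k+1) → ℕ` with `∑ g = n + k + 1` and `f_{jₜ} = c2 (gₜ)`. -/
theorem stmt10 (n k : ℕ) (hn : 0 < n) :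
    Nat.card {l : List ℕ // l.sum = n + 2 * k + 1 ∧ l.count 1 = k ∧
        ∀ x ∈ l, x = 1 ∨ 2 ≤ x} =
      ∑ g ∈ Finset.Nat.antidiagonalTuple (k + 1) (n + k + 1),
        ∏ t : Fin (k + 1), c2 (g t) := by
  have e : (n + k + 1) + k = n + 2 * k + 1 := by omega
  have h := key k (n + k + 1)
  rw [e, c2'_eq_c2] at h
  exact h
end

section
/- Let F_{n,p} be the n×n matrix with entries F(i,j) = -1 if i = j+1, F(i,j) = 1 if j - i ≥ p-1, and F(i,j) = 0 otherwise. Then det(F_{n,p}) equals the number of compositions of n with all parts ≥ p. -/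
/-- The `n × n` Hessenberg matrix `F_{n,p}` with entries `-1` when `i = j + 1`,
`1` when `j - i ≥ p - 1`, and `0` otherwise (the conditions are invariant
under the shift between 0- and 1-based indexing). -/
def F (n p : ℕ) : Matrix (Fin n) (Fin n) ℤ := fun i j =>
  if (i : ℕ) = (j : ℕ) + 1 then -1
  else if (p : ℤ) - 1 ≤ (j : ℤ) - (i : ℤ) then 1
  else 0

lemma F_shift (p n : ℕ) (i j : Fin n) (i' j' : Fin (n + 1))
    (hi : (i' : ℕ) = (i : ℕ) + 1) (hj : (j' : ℕ) = (j : ℕ) + 1) :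
    F (n + 1) p i' j' = F n p i j := by
  unfold F
  have h1 : ((i' : ℕ) = (j' : ℕ) + 1) ↔ ((i : ℕ) = (j : ℕ) + 1) := by omega
  have h2 : ((p : ℤ) - 1 ≤ (j' : ℤ) - (i' : ℤ)) ↔ ((p : ℤ) - 1 ≤ (j : ℤ) - (i : ℤ)) := by
    have hji : ((j' : ℤ)) - (i' : ℤ) = (j : ℤ) - (i : ℤ) := by
      push_cast
      omega
    rw [hji]
  simp only [h1, h2]

lemma succAbove_val {m : ℕ} (j : Fin (m + 1)) (b : Fin m) :
    ((j.succAbove b : Fin (m + 1)) : ℕ) =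
      if (b : ℕ) < (j : ℕ) then (b : ℕ) else (b : ℕ) + 1 := by
  rw [Fin.succAbove]
  split_ifs with h h' h'
  · rfl
  · exact absurd (by rwa [Fin.lt_def] at h) h'
  · exact absurd (by rwa [Fin.lt_def]) h
  · rfl

lemma minor_det (p : ℕ) (hp : 0 < p) :
    ∀ (v m : ℕ) (j : Fin (m + 1)), (j : ℕ) = v →
      ((F (m + 1) p).submatrix Fin.succ j.succAbove).det
        = (-1) ^ v * (F (m - v) p).det := by
  intro v
  induction v with
  | zero =>
    intro m j hj
    have hj0 : j = 0 := Fin.ext hj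
    subst hj0
    have hmat : (F (m + 1) p).submatrix Fin.succ (0 : Fin (m + 1)).succAbove = F m p := by
      ext a b
      rw [Matrix.submatrix_apply, Fin.succAbove_zero]
      exact F_shift p m a b a.succ b.succ (by simp) (by simp)
    rw [hmat]
    simp
  | succ v ih =>
    intro m j hj
    have hm : v + 1 ≤ m := by have := j.isLt; omega
    obtain ⟨M, rfl⟩ : ∃ M, m = M + 1 := ⟨m - 1, by omega⟩
    set N := (F (M + 1 + 1) p).submatrix Fin.succ j.succAbove with hN
    have hcol : ∀ a : Fin (M + 1), N a 0 = if a = 0 then -1 else 0 := by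
      intro a
      have hj0 : ((j.succAbove 0 : Fin (M + 2)) : ℕ) = 0 := by
        rw [succAbove_val]
        simp [hj]
      rw [hN, Matrix.submatrix_apply]
      rcases eq_or_ne a 0 with rfl | h
      · rw [if_pos rfl]
        unfold F
        rw [if_pos (by simp [hj0])]
      · have ha : (a : ℕ) ≠ 0 := fun h' => h (Fin.ext h')
        rw [if_neg h]
        unfold F
        rw [if_neg (by simp [hj0]; omega), if_neg (by push_cast [hj0, Fin.val_succ]; omega)]
    rw [Matrix.det_succ_column_zero]
    rw [Finset.sum_eq_single (0 : Fin (M + 1))]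
    · have hj' : v < M + 1 := by omega
      have key : N.submatrix (0 : Fin (M + 1)).succAbove Fin.succ
          = (F (M + 1) p).submatrix Fin.succ (Fin.mk v hj').succAbove := by
        ext a b
        rw [Fin.succAbove_zero]
        simp only [Matrix.submatrix_apply, hN, Matrix.submatrix_apply]
        refine F_shift p (M + 1) a.succ ((Fin.mk v hj').succAbove b)
          a.succ.succ (j.succAbove b.succ) (by simp) ?_
        rw [succAbove_val, succAbove_val]
        simp only [Fin.val_succ, hj]
        split_ifs <;> omega
      rw [hcol, if_pos rfl, key, ih M (Fin.mk v hj') rfl]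
      have hsub : M + 1 - (v + 1) = M - v := by omega
      rw [hsub]
      simp only [Fin.val_zero, pow_zero, one_mul, mul_one]
      ring
    · intro b _ hb
      rw [hcol, if_neg hb]
      ring
    · intro h
      exact absurd (Finset.mem_univ 0) h

lemma F_row_zero (p m : ℕ) (hp : 0 < p) (j : Fin (m + 1)) :
    F (m + 1) p 0 j = if p ≤ (j : ℕ) + 1 then 1 else 0 := by
  unfold F
  rw [if_neg (by simp)]
  have h : ((p : ℤ) - 1 ≤ (j : ℤ) - ((0 : Fin (m + 1)) : ℤ)) ↔ p ≤ (j : ℕ) + 1 := by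
    simp only [Fin.val_zero]
    push_cast
    omega
  simp only [h]

lemma det_rec (p : ℕ) (hp : 0 < p) (m : ℕ) :
    (F (m + 1) p).det
      = ∑ j : Fin (m + 1), (if p ≤ (j : ℕ) + 1 then (F (m - (j : ℕ)) p).det else 0) := by
  rw [Matrix.det_succ_row_zero]
  refine Finset.sum_congr rfl fun j _ => ?_
  rw [minor_det p hp (j : ℕ) m j rfl, F_row_zero p m hp j]
  split_ifs with h
  · rw [mul_one, ← mul_assoc, ← pow_add, Even.neg_one_pow ⟨(j : ℕ), rfl⟩, one_mul]
  · ring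

lemma S_nil (p : ℕ) (hp : 0 < p) (L : List ℕ) (hL : ∀ x ∈ L, p ≤ x) (hs : L.sum = 0) :
    L = [] := by
  cases L with
  | nil => rfl
  | cons a t =>
    exfalso
    have := hL a (by simp)
    simp only [List.sum_cons] at hs
    omega

lemma S_finite (p n : ℕ) (hp : 0 < p) :
    Finite {l : List ℕ // (∀ x ∈ l, p ≤ x) ∧ l.sum = n} := by
  apply Finite.of_injective
    (fun l : {l : List ℕ // (∀ x ∈ l, p ≤ x) ∧ l.sum = n} =>
      (⟨l.1, fun hi => lt_of_lt_of_le hp (l.2.1 _ hi), l.2.2⟩ : Composition n))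
  intro a b h
  exact Subtype.ext (congrArg Composition.blocks h)

lemma card_S_zero (p : ℕ) (hp : 0 < p) :
    Nat.card {l : List ℕ // (∀ x ∈ l, p ≤ x) ∧ l.sum = 0} = 1 := by
  rw [Nat.card_eq_one_iff_unique]
  constructor
  · constructor
    rintro ⟨l, hl, hs⟩ ⟨l', hl', hs'⟩
    apply Subtype.ext
    simp only
    rw [S_nil p hp l hl hs, S_nil p hp l' hl' hs']
  · exact ⟨⟨[], by simp⟩⟩

lemma card_S_succ (p m : ℕ) (hp : 0 < p) :
    Nat.card {l : List ℕ // (∀ x ∈ l, p ≤ x) ∧ l.sum = m + 1}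
      = ∑ j : Fin (m + 1),
          (if p ≤ (j : ℕ) + 1
            then Nat.card {l : List ℕ // (∀ x ∈ l, p ≤ x) ∧ l.sum = m - (j : ℕ)} else 0) := by
  classical
  -- the sigma type of (first part - 1, rest)
  let T : Fin (m + 1) → Type := fun j =>
    {l : List ℕ // (∀ x ∈ l, p ≤ x) ∧ l.sum = m - (j : ℕ) ∧ p ≤ (j : ℕ) + 1}
  have hTfin : ∀ j, Finite (T j) := by
    intro j
    have := S_finite p (m - (j : ℕ)) hp
    exact Finite.of_injective
      (fun t : T j => (⟨t.1, t.2.1, t.2.2.1⟩ :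
        {l : List ℕ // (∀ x ∈ l, p ≤ x) ∧ l.sum = m - (j : ℕ)}))
      (fun a b h => Subtype.ext (by simpa using congrArg Subtype.val h))
  -- the bijection
  have hcard : Nat.card {l : List ℕ // (∀ x ∈ l, p ≤ x) ∧ l.sum = m + 1}
      = Nat.card (Σ j : Fin (m + 1), T j) := by
    refine (Nat.card_eq_of_bijective
      (fun x : Σ j : Fin (m + 1), T j =>
        (⟨((x.1 : ℕ) + 1) :: x.2.1, ?_, ?_⟩ :
          {l : List ℕ // (∀ x ∈ l, p ≤ x) ∧ l.sum = m + 1})) ⟨?_, ?_⟩).symm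
    · intro y hy
      rcases List.mem_cons.mp hy with rfl | hy
      · exact x.2.2.2.2
      · exact x.2.2.1 y hy
    · have h1 : (x.1 : ℕ) ≤ m := by omega
      have h2 := x.2.2.2.1
      simp only [List.sum_cons, h2]
      omega
    · rintro ⟨j, t⟩ ⟨j', t'⟩ h
      simp only [Subtype.mk.injEq, List.cons.injEq] at h
      obtain ⟨h1, h2⟩ := h
      have hj : j = j' := Fin.ext (by omega)
      subst hj
      exact congrArg _ (Subtype.ext h2)
    · rintro ⟨l, hl, hs⟩
      cases l with
      | nil => simp at hs
      | cons a t =>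
        have ha : p ≤ a := hl a (by simp)
        have hsum : a + t.sum = m + 1 := by simpa using hs
        have ha1 : 1 ≤ a := le_trans hp ha
        have haM : a - 1 < m + 1 := by omega
        have ht2 : t.sum = m - (a - 1) := by omega
        have ht3 : p ≤ (a - 1) + 1 := by omega
        refine ⟨⟨⟨a - 1, haM⟩, ⟨t, fun y hy => hl y (by simp [hy]), ht2, ht3⟩⟩, ?_⟩
        apply Subtype.ext
        simp only
        congr 1
        omega
  rw [hcard]
  have : Nat.card (Σ j : Fin (m + 1), T j) = ∑ j : Fin (m + 1), Nat.card (T j) := by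
    letI : ∀ j, Fintype (T j) := fun j => @Fintype.ofFinite _ (hTfin j)
    rw [Nat.card_eq_fintype_card, Fintype.card_sigma]
    exact Finset.sum_congr rfl fun j _ => (Nat.card_eq_fintype_card).symm
  rw [this]
  refine Finset.sum_congr rfl fun j _ => ?_
  by_cases h : p ≤ (j : ℕ) + 1
  · rw [if_pos h]
    exact Nat.card_congr (Equiv.subtypeEquivRight (fun l => by tauto))
  · rw [if_neg h]
    have : IsEmpty (T j) := ⟨fun t => h t.2.2.2⟩
    exact Nat.card_of_isEmpty

lemma main_aux (p : ℕ) (hp : 0 < p) :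
    ∀ n : ℕ, (F n p).det
      = (Nat.card {l : List ℕ // (∀ x ∈ l, p ≤ x) ∧ l.sum = n} : ℤ) := by
  intro n
  induction n using Nat.strong_induction_on with
  | _ n ih =>
    cases n with
    | zero =>
      rw [card_S_zero p hp]
      simp [Matrix.det_fin_zero]
    | succ m =>
      rw [det_rec p hp m, card_S_succ p m hp]
      push_cast
      refine Finset.sum_congr rfl fun j _ => ?_
      split_ifs with h
      · exact ih (m - (j : ℕ)) (by omega)
      · rfl

/-- `det F_{n,p}` equals the number of compositions of `n` with all parts `≥ p`. -/
theorem stmt12 (n p : ℕ) (hn : 0 < n) (hp : 0 < p) :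
    (F n p).det =
      (Nat.card {l : List ℕ // (∀ x ∈ l, p ≤ x) ∧ l.sum = n} : ℤ) := by
  exact main_aux p hp n
end

section
/- Let F_{n,1} be the n×n matrix with entries F(i,j) = -1 if i = j+1, F(i,j) = 1 if j ≥ i, and F(i,j) = 0 otherwise. Then det(F_{n,1}) = 2^(n-1). -/
/-- The `n × n` Hessenberg matrix `F_{n,1}` with entries `-1` when `i = j + 1`,
`1` when `j ≥ i`, and `0` otherwise. -/
def F1 (n : ℕ) : Matrix (Fin n) (Fin n) ℤ := fun i j =>
  if (i : ℕ) = (j : ℕ) + 1 then -1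
  else if (i : ℕ) ≤ (j : ℕ) then 1
  else 0

/-! The first column of `F1 (n + 2)` is `(1, -1, 0, …, 0)`, and deleting that column together
with either row `0` or row `1` leaves `F1 (n + 1)`. Laplace expansion along the first column
therefore gives `det F1 (n + 2) = 2 * det F1 (n + 1)`, and `det F1 1 = 1`. -/

namespace F1

variable {n : ℕ}

lemma apply_zero_zero : F1 (n + 1) 0 0 = 1 := by
  simp [F1]

lemma apply_one_zero : F1 (n + 2) 1 0 = -1 := by
  simp [F1]

lemma apply_succ_succ_zero (i : Fin n) : F1 (n + 2) i.succ.succ 0 = 0 := by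
  simp [F1]

lemma submatrix_succAbove_zero_succ :
    (F1 (n + 2)).submatrix (Fin.succAbove 0) Fin.succ = F1 (n + 1) := by
  ext i j
  simp [F1]

lemma submatrix_succAbove_one_succ :
    (F1 (n + 2)).submatrix (Fin.succAbove 1) Fin.succ = F1 (n + 1) := by
  ext i j
  rcases Fin.eq_zero_or_eq_succ i with rfl | ⟨i, rfl⟩
  · simp [F1]
  · rw [Matrix.submatrix_apply, Fin.succAbove_of_le_castSucc _ _ (by simp [Fin.le_def])]
    simp [F1]

lemma det_succ_succ : (F1 (n + 2)).det = 2 * (F1 (n + 1)).det := by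
  rw [Matrix.det_succ_column_zero, Fin.sum_univ_succ, Fin.sum_univ_succ]
  simp only [Fin.succ_zero_eq_one, apply_zero_zero, apply_one_zero, apply_succ_succ_zero,
    submatrix_succAbove_zero_succ, submatrix_succAbove_one_succ]
  simp [two_mul]

lemma det_succ (n : ℕ) : (F1 (n + 1)).det = 2 ^ n := by
  induction n with
  | zero => simp [F1]
  | succ m ih => rw [det_succ_succ, ih, pow_succ']

end F1

theorem stmt13_general (n : ℕ) : (F1 n).det = 2 ^ (n - 1) := by
  cases n with
  | zero => simp
  | succ n => exact F1.det_succ n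

/-- `det F_{n,1} = 2^(n-1)`. -/
theorem stmt13 (n : ℕ) (hn : 0 < n) : (F1 n).det = 2 ^ (n - 1) :=
  stmt13_general n
end

section
/- Let F_{n,2} be the n×n matrix with entries F(i,j) = -1 if i = j+1, F(i,j) = 1 if j - i ≥ 1, and F(i,j) = 0 otherwise. Then det(F_{n,2}) equals the Fibonacci number f_{n-1}, i.e., the number of compositions of n with all parts ≥ 2. -/
/-- The `n × n` Hessenberg matrix `F_{n,2}` with entries `-1` when `i = j + 1`,
`1` when `j - i ≥ 1`, and `0` otherwise. -/
def F2 (n : ℕ) : Matrix (Fin n) (Fin n) ℤ := fun i j =>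
  if (i : ℕ) = (j : ℕ) + 1 then -1
  else if (i : ℕ) + 1 ≤ (j : ℕ) then 1
  else 0

/-- Auxiliary matrix: `F2` with the `(0,0)` entry replaced by `1`
(equivalently, first row all ones). -/
def G2 (m : ℕ) : Matrix (Fin m) (Fin m) ℤ := fun i j =>
  if (i : ℕ) = 0 then 1
  else if (i : ℕ) = (j : ℕ) + 1 then -1
  else if (i : ℕ) + 1 ≤ (j : ℕ) then 1
  else 0

lemma val_succAbove_one {m : ℕ} (i : Fin (m + 1)) :
    (((1 : Fin (m + 2)).succAbove i : Fin (m + 2)) : ℕ)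
      = if (i : ℕ) = 0 then 0 else (i : ℕ) + 1 := by
  unfold Fin.succAbove
  by_cases h : i.castSucc < (1 : Fin (m + 2))
  · rw [if_pos h, Fin.coe_castSucc]
    have h' := Fin.lt_def.mp h
    rw [Fin.coe_castSucc, Fin.val_one] at h'
    have hi : (i : ℕ) = 0 := by omega
    simp [hi]
  · rw [if_neg h, Fin.val_succ]
    have h' : ¬ ((i.castSucc : ℕ) < ((1 : Fin (m + 2)) : ℕ)) := fun hc => h (Fin.lt_def.mpr hc)
    rw [Fin.coe_castSucc, Fin.val_one] at h'
    have hi : (i : ℕ) ≠ 0 := by omega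
    simp [hi]

lemma subF2 (m : ℕ) :
    (F2 (m + 2)).submatrix (Fin.succAbove 1) Fin.succ = G2 (m + 1) := by
  ext i j
  simp only [Matrix.submatrix_apply, F2, G2, val_succAbove_one, Fin.val_succ]
  by_cases h : (i : ℕ) = 0
  all_goals simp only [h, if_true, if_false]
  all_goals split_ifs
  all_goals first | omega | exact (‹False›).elim

lemma subG2_0 (m : ℕ) :
    (G2 (m + 2)).submatrix Fin.succ Fin.succ = F2 (m + 1) := by
  ext i j
  simp only [Matrix.submatrix_apply, F2, G2, Fin.val_succ]
  split_ifs
  all_goals first | omega | exact (‹False›).elim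

lemma subG2_1 (m : ℕ) :
    (G2 (m + 2)).submatrix (Fin.succAbove 1) Fin.succ = G2 (m + 1) := by
  ext i j
  simp only [Matrix.submatrix_apply, G2, val_succAbove_one, Fin.val_succ]
  by_cases h : (i : ℕ) = 0
  all_goals simp only [h, if_true, if_false]
  all_goals split_ifs
  all_goals first | omega | exact (‹False›).elim

lemma detF2_succ (m : ℕ) : (F2 (m + 2)).det = (G2 (m + 1)).det := by
  rw [Matrix.det_succ_column_zero, Fin.sum_univ_succ, Fin.sum_univ_succ]
  have h0 : F2 (m + 2) 0 0 = 0 := by simp [F2]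
  have h1 : F2 (m + 2) (Fin.succ 0) 0 = -1 := by simp [F2]
  have hrest : ∀ i : Fin m, F2 (m + 2) (Fin.succ (Fin.succ i)) 0 = 0 := by
    intro i; simp [F2]
  rw [h0, h1, Finset.sum_eq_zero (fun i _ => by rw [hrest i]; ring)]
  simp [subF2 m]

lemma detG2_succ (m : ℕ) :
    (G2 (m + 2)).det = (F2 (m + 1)).det + (G2 (m + 1)).det := by
  rw [Matrix.det_succ_column_zero, Fin.sum_univ_succ, Fin.sum_univ_succ]
  have h0 : G2 (m + 2) 0 0 = 1 := by simp [G2]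
  have h1 : G2 (m + 2) (Fin.succ 0) 0 = -1 := by simp [G2]
  have hrest : ∀ i : Fin m, G2 (m + 2) (Fin.succ (Fin.succ i)) 0 = 0 := by
    intro i; simp [G2]
  rw [h0, h1, Finset.sum_eq_zero (fun i _ => by rw [hrest i]; ring)]
  simp [subG2_0 m, subG2_1 m]

lemma detG2_one : (G2 1).det = 1 := by
  rw [Matrix.det_fin_one]; simp [G2]

lemma detF2_one : (F2 1).det = 0 := by
  rw [Matrix.det_fin_one]; simp [F2]

lemma detG2_fib : ∀ m : ℕ, (G2 (m + 1)).det = (Nat.fib (m + 1) : ℤ) := by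
  have key : ∀ m : ℕ, (G2 (m + 1)).det = (Nat.fib (m + 1) : ℤ) ∧
      (G2 (m + 2)).det = (Nat.fib (m + 2) : ℤ) := by
    intro m
    induction m with
    | zero =>
      constructor
      · simpa using detG2_one
      · rw [detG2_succ 0, detF2_one, detG2_one]; norm_num
    | succ k ih =>
      refine ⟨ih.2, ?_⟩
      rw [detG2_succ (k + 1), detF2_succ k, ih.1, ih.2]
      show (Nat.fib (k + 1) : ℤ) + Nat.fib (k + 2) = (Nat.fib (k + 1 + 2) : ℤ)
      rw [Nat.fib_add_two (n := k + 1)]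
      push_cast; ring
  exact fun m => (key m).1

lemma detF2_fib (n : ℕ) (hn : 0 < n) : (F2 n).det = (Nat.fib (n - 1) : ℤ) := by
  match n, hn with
  | 1, _ => simpa using detF2_one
  | (m + 2), _ => rw [detF2_succ m, detG2_fib m]; norm_num

/-! ### Counting compositions with parts ≥ 2 -/

abbrev S2 (n : ℕ) : Type := {l : List ℕ // (∀ x ∈ l, 2 ≤ x) ∧ l.sum = n}

instance S2finite (n : ℕ) : Finite (S2 n) := by
  refine Finite.of_injective (fun x : S2 n =>
    (⟨x.1, fun {i} hi => by have := x.2.1 i hi; omega, x.2.2⟩ : Composition n)) ?_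
  intro a b h
  exact Subtype.ext (congrArg Composition.blocks h)

def gS (n : ℕ) : S2 (n + 1) ⊕ S2 n → S2 (n + 2)
  | Sum.inl ⟨[], h⟩ => absurd h.2 (by simp)
  | Sum.inl ⟨a :: t, h⟩ =>
      ⟨(a + 1) :: t, by
        obtain ⟨h1, h2⟩ := h
        refine ⟨?_, ?_⟩
        · intro x hx
          rcases List.mem_cons.1 hx with rfl | hx
          · have := h1 a (by simp); omega
          · exact h1 x (List.mem_cons_of_mem _ hx)
        · simp only [List.sum_cons] at h2 ⊢; omega⟩
  | Sum.inr ⟨l, h⟩ =>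
      ⟨2 :: l, by
        refine ⟨?_, ?_⟩
        · intro x hx
          rcases List.mem_cons.1 hx with rfl | hx
          · exact le_refl 2
          · exact h.1 x hx
        · simp only [List.sum_cons, h.2]; omega⟩

lemma gS_bijective (n : ℕ) : Function.Bijective (gS n) := by
  constructor
  · rintro (⟨l₁, h₁⟩ | ⟨l₁, h₁⟩) (⟨l₂, h₂⟩ | ⟨l₂, h₂⟩) h
    · match l₁, h₁, l₂, h₂ with
      | [], h₁, _, _ => exact absurd h₁.2 (by simp)
      | _, _, [], h₂ => exact absurd h₂.2 (by simp)
      | a :: t, h₁, b :: s, h₂ =>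
        simp only [gS, Subtype.mk.injEq, List.cons.injEq] at h
        simp [h.1, h.2]; omega
    · match l₁, h₁ with
      | [], h₁ => exact absurd h₁.2 (by simp)
      | a :: t, h₁ =>
        simp only [gS, Subtype.mk.injEq, List.cons.injEq] at h
        have := h₁.1 a (by simp)
        omega
    · match l₂, h₂ with
      | [], h₂ => exact absurd h₂.2 (by simp)
      | a :: t, h₂ =>
        simp only [gS, Subtype.mk.injEq, List.cons.injEq] at h
        have := h₂.1 a (by simp)
        omega
    · simp only [gS, Subtype.mk.injEq, List.cons.injEq] at h
      simp [h.2]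
  · rintro ⟨l, hl⟩
    match l, hl with
    | [], hl => exact absurd hl.2 (by simp)
    | a :: t, hl =>
      have ha : 2 ≤ a := hl.1 a (by simp)
      have hsum : a + t.sum = n + 2 := by simpa using hl.2
      have ht : ∀ x ∈ t, 2 ≤ x := fun x hx => hl.1 x (List.mem_cons_of_mem _ hx)
      rcases eq_or_lt_of_le ha with rfl | ha3
      · exact ⟨Sum.inr ⟨t, ht, by omega⟩, by simp [gS]⟩
      · refine ⟨Sum.inl ⟨(a - 1) :: t, ?_, ?_⟩, ?_⟩
        · intro x hx
          rcases List.mem_cons.1 hx with rfl | hx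
          · omega
          · exact ht x hx
        · simp only [List.sum_cons]; omega
        · simp only [gS, Subtype.mk.injEq, List.cons.injEq]
          exact ⟨by omega, trivial⟩

lemma cardS2_rec (n : ℕ) :
    Nat.card (S2 (n + 2)) = Nat.card (S2 (n + 1)) + Nat.card (S2 n) := by
  rw [← Nat.card_eq_of_bijective (gS n) (gS_bijective n), Nat.card_sum]

lemma cardS2_zero : Nat.card (S2 0) = 1 := by
  have : Unique (S2 0) := {
    default := ⟨[], by simp, by simp⟩
    uniq := by
      rintro ⟨l, h1, h2⟩
      have : l = [] := by
        cases l with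
        | nil => rfl
        | cons a t =>
          have := h1 a (by simp)
          simp only [List.sum_cons] at h2
          omega
      subst this
      rfl }
  exact Nat.card_unique

lemma cardS2_one : Nat.card (S2 1) = 0 := by
  have : IsEmpty (S2 1) := by
    constructor
    rintro ⟨l, h1, h2⟩
    cases l with
    | nil => simp at h2
    | cons a t =>
      have := h1 a (by simp)
      simp only [List.sum_cons] at h2
      omega
  exact Nat.card_of_isEmpty

lemma cardS2_fib : ∀ n : ℕ, Nat.card (S2 (n + 1)) = Nat.fib n := by
  have key : ∀ n : ℕ, Nat.card (S2 (n + 1)) = Nat.fib n ∧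
      Nat.card (S2 (n + 2)) = Nat.fib (n + 1) := by
    intro n
    induction n with
    | zero =>
      refine ⟨by simpa using cardS2_one, ?_⟩
      rw [cardS2_rec 0, cardS2_zero, cardS2_one]; norm_num
    | succ k ih =>
      refine ⟨ih.2, ?_⟩
      rw [cardS2_rec (k + 1), ih.1, ih.2, Nat.fib_add_two]
      omega
  exact fun n => (key n).1

/-- `det F_{n,2}` is the Fibonacci number `f_{n-1}` (with `Nat.fib 1 = Nat.fib 2 = 1`),
which is the number of compositions of `n` with all parts `≥ 2`. -/
theorem stmt14 (n : ℕ) (hn : 0 < n) :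
    (F2 n).det = (Nat.fib (n - 1) : ℤ) ∧
      Nat.fib (n - 1) =
        Nat.card {l : List ℕ // (∀ x ∈ l, 2 ≤ x) ∧ l.sum = n} := by
  refine ⟨detF2_fib n hn, ?_⟩
  obtain ⟨m, rfl⟩ := Nat.exists_eq_add_of_lt hn
  simpa using (cardS2_fib m).symm
end

section
/- Let F_{n,p} be the n×n matrix with F(i,j) = -1 if i = j+1, F(i,j) = 1 if j - i ≥ p-1, else 0. For indices 1 ≤ i_1 < ... < i_k ≤ n, the principal minor M(i_1,...,i_k) of F_{n,p} obtained by deleting rows and columns i_1,...,i_k satisfies M(i_1,...,i_k) = det(F_{i_1-1,p}) * det(F_{i_2-i_1-1,p}) * ... * det(F_{i_k-i_{k-1}-1,p}) * det(F_{n-i_k,p}), where det of the empty (0×0) matrix is 1. -/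
/-- Extension of a tuple of deleted (1-based) indices `i₁ < ⋯ < i_k` by
`i₀ = 0` and `i_{k+1} = n + 1`. -/
def extIdx (n k : ℕ) (i : Fin k → ℕ) : ℕ → ℕ := fun t =>
  if h : t = 0 then 0
  else if h' : t ≤ k then i ⟨t - 1, by omega⟩
  else n + 1

open Matrix Finset

def toeplitz {R : Type*} (f : ℤ → R) (n : ℕ) : Matrix (Fin n) (Fin n) R :=
  of fun a b => f ((b : ℤ) - a)

def hessenbergSymbol (p : ℕ) (d : ℤ) : ℤ :=
  if d = -1 then -1 else if (p : ℤ) - 1 ≤ d then 1 else 0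

theorem F_eq_toeplitz (n p : ℕ) : F n p = toeplitz (hessenbergSymbol p) n := by
  ext a b
  simp only [F, toeplitz, hessenbergSymbol, of_apply]
  exact if_congr (by omega) rfl rfl

theorem hessenbergSymbol_eq_zero {p : ℕ} {d : ℤ} (hd : d ≤ -2) : hessenbergSymbol p d = 0 := by
  simp only [hessenbergSymbol]
  rw [if_neg (by omega), if_neg (by omega)]

section Gaps

variable {n k : ℕ} {i : Fin k → ℕ}

@[simp]
theorem extIdx_zero : extIdx n k i 0 = 0 := rfl

theorem extIdx_succ {t : ℕ} (ht : t < k) : extIdx n k i (t + 1) = i ⟨t, ht⟩ := by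
  simp [extIdx, Nat.succ_le_of_lt ht]

@[simp]
theorem extIdx_succ_self : extIdx n k i (k + 1) = n + 1 := by
  simp [extIdx]

theorem extIdx_le (hin : ∀ t, i t ≤ n) (t : ℕ) : extIdx n k i t ≤ n + 1 := by
  unfold extIdx
  split_ifs
  · omega
  · exact (hin _).trans (Nat.le_succ n)
  · rfl

theorem succ_ne_extIdx_succ {a : ℕ} (ha : ∀ t, a + 1 ≠ i t) (han : a < n) (t : ℕ) :
    a + 1 ≠ extIdx n k i (t + 1) := by
  rcases lt_or_ge t k with htk | hkt
  · rw [extIdx_succ htk]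
    exact ha _
  · simp only [extIdx, dif_neg (Nat.succ_ne_zero t), dif_neg (show ¬t + 1 ≤ k by omega)]
    omega

/-- For a kept `0`-based position `j` (i.e. `j + 1 ≠ i t` for all `t`), the index of the gap
containing it. -/
def gapIndex (i : Fin k → ℕ) (j : ℕ) : ℕ := #{t | i t ≤ j}

theorem gapIndex_le (j : ℕ) : gapIndex i j ≤ k :=
  (card_filter_le _ _).trans (card_fin k).le

theorem lt_gapIndex_iff (hi : Monotone i) (t : Fin k) (j : ℕ) :
    (t : ℕ) < gapIndex i j ↔ i t ≤ j := by
  constructor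
  · intro ht
    by_contra! hjt
    have hsub : ({s | i s ≤ j} : Finset (Fin k)) ⊆ Iio t := fun s hs => by
      simp only [mem_filter, mem_univ, true_and] at hs
      exact mem_Iio.2 (lt_of_not_ge fun hts => (hjt.trans_le (hi hts)).not_ge hs)
    have := card_le_card hsub
    rw [Fin.card_Iio] at this
    exact ht.not_ge this
  · intro hjt
    have hsub : Iic t ⊆ ({s | i s ≤ j} : Finset (Fin k)) := fun s hs => by
      simp only [mem_filter, mem_univ, true_and]
      exact (hi (mem_Iic.1 hs)).trans hjt
    have := card_le_card hsub
    rw [Fin.card_Iic] at this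
    exact this

theorem extIdx_le_iff (hi : Monotone i) {t : ℕ} (ht : t ≤ k) (j : ℕ) :
    extIdx n k i t ≤ j ↔ t ≤ gapIndex i j := by
  rcases t with _ | t
  · simp
  · rw [extIdx_succ (by omega), ← lt_gapIndex_iff hi]
    rfl

theorem lt_extIdx_succ_iff (hi : Monotone i) {t j : ℕ} (ht : t ≤ k) (hj : j ≤ n) :
    j < extIdx n k i (t + 1) ↔ gapIndex i j ≤ t := by
  rcases ht.lt_or_eq with htk | rfl
  · rw [extIdx_succ htk, ← not_le, ← lt_gapIndex_iff hi, not_lt]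
  · rw [extIdx_succ_self]
    exact iff_of_true (Nat.lt_succ_of_le hj) (gapIndex_le j)

theorem gapIndex_eq_iff (hi : Monotone i) {t j : ℕ} (ht : t ≤ k) (hj : j ≤ n) :
    gapIndex i j = t ↔ extIdx n k i t ≤ j ∧ j < extIdx n k i (t + 1) := by
  rw [extIdx_le_iff hi ht, lt_extIdx_succ_iff hi ht hj]
  omega

end Gaps

section Toeplitz

variable {R : Type*} [CommRing R] {f : ℤ → R} {n k : ℕ} {i : Fin k → ℕ}

abbrev Kept (n : ℕ) (i : Fin k → ℕ) : Type := {j : Fin n // ∀ t, (j : ℕ) + 1 ≠ i t}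

theorem blockTriangular_toeplitz_submatrix_kept (hf : ∀ d ≤ -2, f d = 0) (hi : Monotone i) :
    ((toeplitz f n).submatrix Subtype.val Subtype.val :
      Matrix (Kept n i) (Kept n i) R).BlockTriangular fun a => gapIndex i a.1 := by
  intro a b hab
  set t : Fin k := ⟨gapIndex i b.1, hab.trans_le (gapIndex_le _)⟩
  have hta : i t ≤ a.1 := (lt_gapIndex_iff hi t a.1).1 hab
  have htb : ¬i t ≤ b.1 := fun h => lt_irrefl _ ((lt_gapIndex_iff hi t b.1).2 h)
  have hbt := b.2 t
  exact hf _ (by omega)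

theorem extIdx_add_mem_gap (hi : Monotone i) (hin : ∀ t, i t ≤ n) {t x : ℕ} (ht : t ≤ k)
    (hx : x < extIdx n k i (t + 1) - extIdx n k i t - 1) :
    extIdx n k i t + x < n ∧ (∀ s, extIdx n k i t + x + 1 ≠ i s) ∧
      gapIndex i (extIdx n k i t + x) = t := by
  have hle := extIdx_le hin (t + 1)
  have hgap : ∀ y ≤ x + 1, gapIndex i (extIdx n k i t + y) = t := fun y hy =>
    (gapIndex_eq_iff (n := n) (j := extIdx n k i t + y) hi ht (by omega)).2 ⟨by omega, by omega⟩
  refine ⟨by omega, fun s hs => ?_, hgap x le_self_add⟩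
  have hs_lt : (s : ℕ) < gapIndex i (extIdx n k i t + (x + 1)) :=
    (lt_gapIndex_iff hi s _).2 (by omega)
  rw [hgap (x + 1) le_rfl, ← hgap x le_self_add, lt_gapIndex_iff hi] at hs_lt
  omega

theorem exists_eq_extIdx_add_of_gapIndex_eq (hi : Monotone i) (a : Kept n i) {t : ℕ}
    (ht : t ≤ k) (ha : gapIndex i a.1 = t) :
    ∃ x < extIdx n k i (t + 1) - extIdx n k i t - 1, (a.1 : ℕ) = extIdx n k i t + x := by
  obtain ⟨hlo, hhi⟩ := (gapIndex_eq_iff hi ht a.1.2.le).1 ha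
  have hne := succ_ne_extIdx_succ a.2 a.1.2 t
  exact ⟨a.1 - extIdx n k i t, by omega, by omega⟩

/-- The positions of the `t`-th gap, listed in increasing order. -/
noncomputable def gapEquiv (hi : Monotone i) (hin : ∀ t, i t ≤ n) {t : ℕ} (ht : t ≤ k) :
    Fin (extIdx n k i (t + 1) - extIdx n k i t - 1) ≃ {a : Kept n i // gapIndex i a.1 = t} :=
  Equiv.ofBijective
    (fun x => ⟨⟨⟨extIdx n k i t + x, (extIdx_add_mem_gap hi hin ht x.2).1⟩,
      (extIdx_add_mem_gap hi hin ht x.2).2.1⟩, (extIdx_add_mem_gap hi hin ht x.2).2.2⟩)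
    ⟨fun x y hxy => Fin.ext (by simpa using congrArg (fun a => (a.1.1 : ℕ)) hxy), fun a => by
      obtain ⟨x, hx, hax⟩ := exists_eq_extIdx_add_of_gapIndex_eq hi a.1 ht a.2
      exact ⟨⟨x, hx⟩, Subtype.ext (Subtype.ext (Fin.ext hax.symm))⟩⟩

theorem det_toSquareBlock_toeplitz_submatrix_kept (hi : Monotone i) (hin : ∀ t, i t ≤ n)
    {t : ℕ} (ht : t ≤ k) :
    (((toeplitz f n).submatrix Subtype.val Subtype.val :
      Matrix (Kept n i) (Kept n i) R).toSquareBlock (fun a => gapIndex i a.1) t).det =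
      (toeplitz f (extIdx n k i (t + 1) - extIdx n k i t - 1)).det := by
  rw [← det_submatrix_equiv_self (gapEquiv hi hin ht)]
  congr 1
  ext x y
  show f (((extIdx n k i t + y : ℕ) : ℤ) - ((extIdx n k i t + x : ℕ) : ℤ)) = f ((y : ℤ) - x)
  congr 1
  push_cast
  ring

theorem det_toeplitz_submatrix_kept (hf : ∀ d ≤ -2, f d = 0) (hi : Monotone i)
    (hin : ∀ t, i t ≤ n) :
    ((toeplitz f n).submatrix Subtype.val Subtype.val : Matrix (Kept n i) (Kept n i) R).det =
      ∏ t ∈ range (k + 1), (toeplitz f (extIdx n k i (t + 1) - extIdx n k i t - 1)).det := by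
  have himage : univ.image (fun a : Kept n i => gapIndex i a.1) ⊆ range (k + 1) := by
    intro t ht
    obtain ⟨a, -, rfl⟩ := mem_image.1 ht
    exact mem_range.2 (Nat.lt_succ_of_le (gapIndex_le _))
  rw [(blockTriangular_toeplitz_submatrix_kept hf hi).det, prod_subset himage]
  · exact prod_congr rfl fun t ht =>
      det_toSquareBlock_toeplitz_submatrix_kept hi hin (Nat.lt_succ_iff.1 (mem_range.1 ht))
  · intro t _ ht
    have : IsEmpty {a : Kept n i // gapIndex i a.1 = t} :=
      ⟨fun a => ht (mem_image.2 ⟨a.1, mem_univ _, a.2⟩)⟩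
    exact det_isEmpty

end Toeplitz

theorem stmt15_general (n p k : ℕ) (i : Fin k → ℕ) (hmono : StrictMono i)
    (hbound : ∀ t, 1 ≤ i t ∧ i t ≤ n) :
    Matrix.det (Matrix.of
        (fun a b : {j : Fin n // ∀ t, (j : ℕ) + 1 ≠ i t} => F n p a.1 b.1)) =
      ∏ t ∈ Finset.range (k + 1),
        (F (extIdx n k i (t + 1) - extIdx n k i t - 1) p).det := by
  simp only [F_eq_toeplitz]
  exact det_toeplitz_submatrix_kept (fun _ => hessenbergSymbol_eq_zero) hmono.monotone
    fun t => (hbound t).2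

/-- For 1-based indices `1 ≤ i₁ < ⋯ < i_k ≤ n`, the principal minor of `F_{n,p}`
obtained by deleting rows and columns `i₁, …, i_k` (here: the determinant of
`F_{n,p}` restricted to the positions `j` with `j + 1 ∉ {i₁, …, i_k}`, using
0-based positions `j`) equals
`det F_{i₁-1,p} ⋅ det F_{i₂-i₁-1,p} ⋯ det F_{i_k-i_{k-1}-1,p} ⋅ det F_{n-i_k,p}`,
where the determinant of the empty matrix is `1`. -/
theorem stmt15 (n p k : ℕ) (hn : 0 < n) (hp : 0 < p) (hk : 0 < k) (hkn : k ≤ n)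
    (i : Fin k → ℕ) (hmono : StrictMono i)
    (hbound : ∀ t, 1 ≤ i t ∧ i t ≤ n) :
    Matrix.det (Matrix.of
        (fun a b : {j : Fin n // ∀ t, (j : ℕ) + 1 ≠ i t} => F n p a.1 b.1)) =
      ∏ t ∈ Finset.range (k + 1),
        (F (extIdx n k i (t + 1) - extIdx n k i t - 1) p).det :=
  stmt15_general n p k i hmono hbound
end

section
/- Let F_{n,p} be the n×n matrix with F(i,j) = -1 if i = j+1, F(i,j) = 1 if j - i ≥ p-1, else 0. Then the sum of all principal minors of order n-k of F_{n,p} equals the number of compositions of n + kp - 2k with exactly k parts equal to p-1 and all other parts ≥ p. -/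
open Finset Matrix

def leadingMinor {R : Type*} [CommRing R] (H : ℕ → ℕ → R) (n : ℕ) : R :=
  (of fun i j : Fin n => H i j).det

theorem leadingMinor_succ_of_hessenberg {R : Type*} [CommRing R] (n : ℕ) (H : ℕ → ℕ → R)
    (hH : ∀ i j, i ≤ n → j + 1 < i → H i j = 0) :
    leadingMinor H (n + 1) = ∑ L ∈ range (n + 1), (-1) ^ L * (∏ s ∈ range L, H (s + 1) s) *
      H 0 L * leadingMinor (fun i j => H (i + L + 1) (j + L + 1)) (n - L) := by
  induction n generalizing H with
  | zero => simp [leadingMinor]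
  | succ n ih =>
    -- deleting row `1` and column `0` leaves a Hessenberg matrix whose first row is the rest
    -- of row `0`
    set H' : ℕ → ℕ → R := fun i j => H (if i = 0 then 0 else i + 1) (j + 1)
    have hH' : ∀ i j, i ≤ n → j + 1 < i → H' i j = 0 := fun i j hi hij => by
      simp only [H', if_neg (show i ≠ 0 by omega)]
      exact hH _ _ (by omega) (by omega)
    have minor_one : (of fun i j : Fin (n + 2) => H i j).submatrix (Fin.succ 0).succAbove
        Fin.succ = of fun i j : Fin (n + 1) => H' i j := by
      ext i j
      cases i using Fin.cases <;> simp [H', Fin.succAbove, Fin.lt_def]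
    have expand : leadingMinor H (n + 2) =
        H 0 0 * leadingMinor (fun i j => H (i + 1) (j + 1)) (n + 1)
          - H 1 0 * leadingMinor H' (n + 1) := by
      rw [leadingMinor, det_succ_column_zero, Fin.sum_univ_succ, Fin.sum_univ_succ,
        sum_eq_zero fun (i : Fin n) _ => by
          rw [of_apply, Fin.val_zero, hH _ 0 (by simp) (by simp)]; ring, minor_one]
      simp [leadingMinor, sub_eq_add_neg, Matrix.submatrix]
    rw [expand, ih H' hH', sum_range_succ' _ (n + 1), mul_sum, sub_eq_add_neg,
      add_comm (H 0 0 * _), ← sum_neg_distrib]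
    congr 1
    · refine sum_congr rfl fun L _ => ?_
      simp only [H', prod_range_succ', pow_succ, Nat.add_sub_add_right, Nat.add_one_ne_zero,
        ↓reduceIte]
      ring_nf
    · simp

def entryF (p a b : ℕ) : ℤ :=
  if a = b + 1 then -1 else if (p : ℤ) - 1 ≤ (b : ℤ) - (a : ℤ) then 1 else 0

theorem entryF_of_lt {p a b : ℕ} (h : b < a) : entryF p a b = if a = b + 1 then -1 else 0 := by
  unfold entryF
  split_ifs <;> omega

theorem entryF_self_add (p a L : ℕ) : entryF p a (a + L) = if p ≤ L + 1 then 1 else 0 := by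
  unfold entryF
  split_ifs <;> omega

-- The principal minor of `F` on the rows and columns in `l` (the default of `getD` is never read).
def principalMinor (p : ℕ) (l : List ℕ) : ℤ :=
  leadingMinor (fun i j => entryF p (l.getD i 0) (l.getD j 0)) l.length

theorem neg_one_pow_mul_prod_entryF_succ (p : ℕ) :
    ∀ (L a : ℕ) (t : List ℕ), (a :: t).Pairwise (· < ·) → L ≤ t.length →
      (-1) ^ L * ∏ s ∈ range L, entryF p ((a :: t).getD (s + 1) 0) ((a :: t).getD s 0) =
        if t.take L = List.range' (a + 1) L then 1 else 0
  | 0, _, _, _, _ => by simp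
  | L + 1, a, b :: t, h, hL => by
    obtain ⟨hab, hbt⟩ := List.pairwise_cons.mp h
    have ih := neg_one_pow_mul_prod_entryF_succ p L b t hbt (by simpa using hL)
    rw [prod_range_succ', pow_succ, mul_mul_mul_comm]
    simp only [List.getD_cons_succ, List.getD_cons_zero] at ih ⊢
    rw [ih, entryF_of_lt (hab b List.mem_cons_self)]
    simp only [List.take_succ_cons, List.range'_succ, List.cons.injEq]
    split_ifs <;> simp_all

theorem entryF_getD_eq_zero {p : ℕ} {l : List ℕ} (h : l.Pairwise (· < ·)) {i j : ℕ}
    (hi : i < l.length) (hij : j + 1 < i) : entryF p (l.getD i 0) (l.getD j 0) = 0 := by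
  have hlt := List.pairwise_iff_getElem.mp h
  have h₁ := hlt j (j + 1) (by omega) (by omega) (by omega)
  have h₂ := hlt (j + 1) i (by omega) hi (by omega)
  rw [List.getD_eq_getElem _ _ hi, List.getD_eq_getElem _ _ (by omega),
    entryF_of_lt (by omega), if_neg (by omega)]

-- `(-1) ^ L` times the product of the first `L` subdiagonal entries is `1` exactly when
-- `a, t₀, …, t_{L-1}` are consecutive, and then the corner entry is `1` iff `p ≤ L + 1`.
theorem principalMinor_cons {p a : ℕ} {t : List ℕ} (h : (a :: t).Pairwise (· < ·)) :
    principalMinor p (a :: t) = ∑ L ∈ (range (t.length + 1)).filter (p ≤ · + 1),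
      if t.take L = List.range' (a + 1) L then principalMinor p (t.drop L) else 0 := by
  rw [principalMinor, List.length_cons, leadingMinor_succ_of_hessenberg _ _
    fun i j hi => entryF_getD_eq_zero h (by simp only [List.length_cons]; omega), sum_filter]
  refine sum_congr rfl fun L hL => ?_
  rw [mem_range] at hL
  rw [neg_one_pow_mul_prod_entryF_succ p L a t h (by omega)]
  have hshift : leadingMinor (fun i j => entryF p ((a :: t).getD (i + L + 1) 0)
      ((a :: t).getD (j + L + 1) 0)) (t.length - L) = principalMinor p (t.drop L) := by
    rw [principalMinor, List.length_drop]
    congr 1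
    funext i j
    simp [List.getD_eq_getElem?_getD, add_comm]
  by_cases htake : t.take L = List.range' (a + 1) L
  · have hL : (a :: t).getD L 0 = a + L := by
      cases L with
      | zero => simp
      | succ L =>
        rw [List.getD_cons_succ, List.getD_eq_getElem?_getD,
          ← List.getElem?_take_of_lt (Nat.lt_succ_self L), htake,
          List.getElem?_range' (Nat.lt_succ_self L), Option.getD_some]
        omega
    simp only [if_pos htake, one_mul, List.getD_cons_zero, hL, entryF_self_add, hshift]
    split_ifs <;> simp
  · simp [htake]

theorem det_F_subtype_eq_principalMinor (n p : ℕ) (s : Finset (Fin n)) :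
    (of fun a b : {x // x ∈ s} => F n p a.1 b.1).det =
      principalMinor p (s.map Fin.valEmbedding).sort := by
  have hmono : StrictMonoOn (Fin.valEmbedding : Fin n ↪ ℕ) s := fun _ _ _ _ h => h
  rw [← hmono.map_finsetSort]
  set l := s.sort.map Fin.valEmbedding
  have hl : s.card = l.length := by simp [l]
  rw [← det_submatrix_equiv_self (s.orderIsoOfFin hl).toEquiv]
  unfold principalMinor leadingMinor
  congr 1
  ext i j
  change F n p _ _ = entryF p (l.getD i 0) (l.getD j 0)
  rw [List.getD_eq_getElem _ _ i.isLt, List.getD_eq_getElem _ _ j.isLt]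
  simp [l, F, entryF, orderEmbOfFin_apply]

theorem sum_det_F_subtype_eq (n p m : ℕ) :
    ∑ s ∈ (univ : Finset (Fin n)).powersetCard m,
        (of fun a b : {x // x ∈ s} => F n p a.1 b.1).det =
      ∑ S ∈ (range n).powersetCard m, principalMinor p S.sort := by
  rw [← Nat.Iio_eq_range, ← Fin.map_valEmbedding_univ, powersetCard_map, sum_map]
  exact sum_congr rfl fun s _ => det_F_subtype_eq_principalMinor n p s

theorem sum_powersetCard_succ_insert {α β : Type*} [DecidableEq α] [AddCommMonoid β]
    {a : α} {s : Finset α} (ha : a ∉ s) (j : ℕ) (f : Finset α → β) :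
    ∑ S ∈ (insert a s).powersetCard (j + 1), f S =
      ∑ S ∈ s.powersetCard (j + 1), f S + ∑ S ∈ s.powersetCard j, f (insert a S) := by
  have notMem : ∀ {j S}, S ∈ s.powersetCard j → a ∉ S := fun hS h =>
    ha ((mem_powersetCard.mp hS).1 h)
  rw [powersetCard_succ_insert ha, sum_union, sum_image]
  · intro S hS T hT hST
    simpa [erase_insert (notMem hS), erase_insert (notMem hT)] using congrArg (·.erase a) hST
  · rw [disjoint_left]
    intro S hS hS'
    obtain ⟨T, -, rfl⟩ := mem_image.mp hS'
    exact notMem hS (mem_insert_self a T)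

theorem sum_powersetCard_Ico_ite_take (f : List ℕ → ℤ) (e : ℕ) :
    ∀ L d j, L ≤ j → d + j ≤ e →
      ∑ S ∈ (Ico d e).powersetCard j,
          (if S.sort.take L = List.range' d L then f (S.sort.drop L) else 0) =
        ∑ T ∈ (Ico (d + L) e).powersetCard (j - L), f T.sort
  | 0, d, j, _, _ => by simp
  | L + 1, d, j + 1, hL, hj => by
    have hd : d ∉ Ico (d + 1) e := by simp
    rw [← insert_Ico_add_one_left_eq_Ico (by omega), sum_powersetCard_succ_insert hd,
      sum_eq_zero, zero_add, Nat.add_sub_add_right, show d + (L + 1) = d + 1 + L by omega,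
      ← sum_powersetCard_Ico_ite_take f e L (d + 1) j (by omega) (by omega)]
    · refine sum_congr rfl fun S hS => ?_
      rw [sort_insert _ (fun b hb => ?_) fun h => hd ((mem_powersetCard.mp hS).1 h)]
      · simp [List.range'_succ]
      · exact Nat.le_of_succ_le (mem_Ico.mp ((mem_powersetCard.mp hS).1 hb)).1
    · intro S hS
      rw [if_neg]
      intro htake
      have : d ∈ S.sort := List.mem_of_mem_take (htake ▸ List.mem_range'_1.mpr (by omega))
      exact hd ((mem_powersetCard.mp hS).1 ((mem_sort _).mp this))

def minorSum (p c m k : ℕ) : ℤ :=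
  ∑ S ∈ (Ico c (c + m + k)).powersetCard m, principalMinor p S.sort

theorem principalMinor_nil (p : ℕ) : principalMinor p [] = 1 :=
  det_fin_zero

theorem minorSum_zero (p c k : ℕ) : minorSum p c 0 k = 1 := by
  simp [minorSum, principalMinor_nil]

theorem minorSum_succ (p c m k : ℕ) : minorSum p c (m + 1) k =
    ∑ S ∈ (Ico (c + 1) (c + (m + 1) + k)).powersetCard (m + 1), principalMinor p S.sort +
      ∑ L ∈ (range (m + 1)).filter (p ≤ · + 1), minorSum p (c + L + 1) (m - L) k := by
  have hc : c ∉ Ico (c + 1) (c + (m + 1) + k) := by simp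
  rw [minorSum, ← insert_Ico_add_one_left_eq_Ico (by omega), sum_powersetCard_succ_insert hc]
  congr 1
  have peel : ∀ S ∈ (Ico (c + 1) (c + (m + 1) + k)).powersetCard m,
      principalMinor p (insert c S).sort = ∑ L ∈ (range (m + 1)).filter (p ≤ · + 1),
        if S.sort.take L = List.range' (c + 1) L then principalMinor p (S.sort.drop L) else 0 := by
    intro S hS
    have hcS : ∀ b ∈ S, c < b := fun b hb => (mem_Ico.mp ((mem_powersetCard.mp hS).1 hb)).1
    rw [sort_insert _ (fun b hb => (hcS b hb).le) fun h => lt_irrefl c (hcS c h),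
      principalMinor_cons (List.pairwise_cons.mpr ⟨fun b hb => hcS b ((mem_sort _).mp hb),
        (sortedLT_sort S).pairwise⟩), length_sort, (mem_powersetCard.mp hS).2]
  rw [sum_congr rfl peel, sum_comm]
  refine sum_congr rfl fun L hL => ?_
  have hLm : L ≤ m := Nat.lt_succ_iff.mp (mem_range.mp (mem_filter.mp hL).1)
  rw [sum_powersetCard_Ico_ite_take _ _ L (c + 1) m hLm (by omega), minorSum,
    show c + L + 1 + (m - L) + k = c + (m + 1) + k by omega, add_right_comm]

theorem minorSum_succ_zero (p c m : ℕ) : minorSum p c (m + 1) 0 =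
    ∑ L ∈ (range (m + 1)).filter (p ≤ · + 1), minorSum p (c + L + 1) (m - L) 0 := by
  rw [minorSum_succ, powersetCard_eq_empty.mpr (by rw [Nat.card_Ico]; omega), sum_empty, zero_add]

theorem minorSum_succ_succ (p c m k : ℕ) : minorSum p c (m + 1) (k + 1) =
    minorSum p (c + 1) (m + 1) k +
      ∑ L ∈ (range (m + 1)).filter (p ≤ · + 1), minorSum p (c + L + 1) (m - L) (k + 1) := by
  rw [minorSum_succ, minorSum, show c + (m + 1) + (k + 1) = c + 1 + (m + 1) + k by omega]

-- `m` is the sum of the parts `≥ p` and `k` the number of parts `p - 1`.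
def compositions (p : ℕ) : ℕ → ℕ → Finset (List ℕ)
  | 0, 0 => {[]}
  | 0, k + 1 => (compositions p 0 k).image (List.cons (p - 1))
  | m + 1, 0 => ((range (m + 1)).filter (p ≤ · + 1)).biUnion fun L =>
      (compositions p (m - L) 0).image (List.cons (L + 1))
  | m + 1, k + 1 => (compositions p (m + 1) k).image (List.cons (p - 1)) ∪
      ((range (m + 1)).filter (p ≤ · + 1)).biUnion fun L =>
        (compositions p (m - L) (k + 1)).image (List.cons (L + 1))

theorem card_biUnion_image_cons {α β : Type*} [DecidableEq β] {s : Finset α} {g : α → β}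
    (hg : Set.InjOn g s) (f : α → Finset (List β)) :
    (s.biUnion fun a => (f a).image (List.cons (g a))).card = ∑ a ∈ s, (f a).card := by
  rw [card_biUnion]
  · exact sum_congr rfl fun a _ => card_image_of_injective _ List.cons_injective
  · intro a ha b hb hab
    simp only [disjoint_left, mem_image, not_exists, not_and]
    rintro _ ⟨t, -, rfl⟩ u - h
    exact hab (hg ha hb (List.cons.inj h).1.symm)

theorem card_compositions_zero (p k : ℕ) : (compositions p 0 k).card = 1 := by
  induction k with
  | zero => simp [compositions]
  | succ k ih => rw [compositions, card_image_of_injective _ List.cons_injective, ih]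

theorem card_compositions_succ_zero (p m : ℕ) : (compositions p (m + 1) 0).card =
    ∑ L ∈ (range (m + 1)).filter (p ≤ · + 1), (compositions p (m - L) 0).card := by
  rw [compositions, card_biUnion_image_cons (fun _ _ _ _ => Nat.succ_inj.mp)]

theorem card_compositions_succ_succ (p m k : ℕ) : (compositions p (m + 1) (k + 1)).card =
    (compositions p (m + 1) k).card +
      ∑ L ∈ (range (m + 1)).filter (p ≤ · + 1), (compositions p (m - L) (k + 1)).card := by
  rw [compositions, card_union_of_disjoint, card_image_of_injective _ List.cons_injective,
    card_biUnion_image_cons (fun _ _ _ _ => Nat.succ_inj.mp)]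
  simp only [disjoint_left, mem_image, mem_biUnion, mem_filter, not_exists, not_and]
  rintro _ ⟨t, -, rfl⟩ L ⟨-, hL⟩ u - h
  have := (List.cons.inj h).1
  omega

theorem nil_mem_compositions {p m k : ℕ} : [] ∈ compositions p m k ↔ m = 0 ∧ k = 0 := by
  cases m <;> cases k <;> simp [compositions]

theorem cons_mem_compositions {p m k x : ℕ} {t : List ℕ} (hp : 0 < p) :
    x :: t ∈ compositions p m k ↔
      (x = p - 1 ∧ ∃ k', k = k' + 1 ∧ t ∈ compositions p m k') ∨
        (p ≤ x ∧ x ≤ m ∧ t ∈ compositions p (m - x) k) := by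
  have gap : ∀ m k, x :: t ∈ (compositions p m k).image (List.cons (p - 1)) ↔
      x = p - 1 ∧ t ∈ compositions p m k := by
    simp [eq_comm, and_comm]
  have big : ∀ m k, x :: t ∈ ((range (m + 1)).filter (p ≤ · + 1)).biUnion
      (fun L => (compositions p (m - L) k).image (List.cons (L + 1))) ↔
        p ≤ x ∧ x ≤ m + 1 ∧ t ∈ compositions p (m + 1 - x) k := by
    intro m k
    simp only [mem_biUnion, mem_filter, mem_range, mem_image, List.cons.injEq]
    constructor
    · rintro ⟨L, ⟨hL, hpL⟩, u, hu, rfl, rfl⟩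
      exact ⟨hpL, by omega, by simpa using hu⟩
    · rintro ⟨hpx, hxm, ht⟩
      exact ⟨x - 1, ⟨by omega, by omega⟩, t, by rwa [show m - (x - 1) = m + 1 - x by omega],
        by omega, rfl⟩
  match m, k with
  | 0, 0 =>
    simp only [compositions.eq_1, mem_singleton, reduceCtorEq, false_iff]
    rintro (⟨-, k', hk, -⟩ | ⟨hpx, hx, -⟩) <;> omega
  | 0, k + 1 =>
    rw [compositions.eq_2, gap]
    constructor
    · rintro ⟨rfl, ht⟩
      exact Or.inl ⟨rfl, k, rfl, ht⟩
    · rintro (⟨rfl, k', hk, ht⟩ | ⟨hpx, hx, -⟩)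
      · exact ⟨rfl, Nat.succ_inj.mp hk ▸ ht⟩
      · omega
  | m + 1, 0 => rw [compositions.eq_3, big]; simp
  | m + 1, k + 1 => rw [compositions.eq_4, mem_union, gap, big]; simp

theorem count_mul_le_sum (a : ℕ) (l : List ℕ) : l.count a * a ≤ l.sum := by
  induction l with
  | nil => simp
  | cons x t ih =>
    simp only [List.count_cons, List.sum_cons, beq_iff_eq]
    split_ifs with h
    · rw [h, add_mul, one_mul]
      omega
    · rw [add_zero]
      omega

theorem mem_compositions {p : ℕ} (hp : 0 < p) (l : List ℕ) (m k : ℕ) :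
    l ∈ compositions p m k ↔
      l.sum = m + k * (p - 1) ∧ l.count (p - 1) = k ∧ ∀ x ∈ l, x = p - 1 ∨ p ≤ x := by
  induction l generalizing m k with
  | nil =>
    rw [nil_mem_compositions]
    constructor
    · rintro ⟨rfl, rfl⟩
      simp
    · rintro ⟨hs, hc, -⟩
      simp only [List.sum_nil, List.count_nil] at hs hc
      subst hc
      omega
  | cons x t ih =>
    simp only [cons_mem_compositions hp, ih, List.sum_cons, List.count_cons,
      List.forall_mem_cons, beq_iff_eq]
    by_cases hx : x = p - 1
    · subst hx
      simp only [if_true, show ¬p ≤ p - 1 by omega, false_and, or_false, true_and]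
      constructor
      · rintro ⟨k', rfl, hs, hc, ha⟩
        exact ⟨by rw [hs, add_mul, one_mul]; omega, by omega, ha⟩
      · rintro ⟨hs, hc, ha⟩
        refine ⟨t.count (p - 1), hc.symm, ?_, rfl, ha⟩
        subst hc
        rw [add_mul, one_mul] at hs
        omega
    · simp only [hx, if_false, false_and, false_or, add_zero]
      constructor
      · rintro ⟨hpx, hxm, hs, hc, ha⟩
        exact ⟨by omega, hc, hpx, ha⟩
      · rintro ⟨hs, hc, hpx, ha⟩
        have := count_mul_le_sum (p - 1) t
        rw [hc] at this
        exact ⟨hpx, by omega, by omega, hc, ha⟩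

theorem minorSum_eq_card_compositions (p m k c : ℕ) :
    minorSum p c m k = (compositions p m k).card := by
  induction m, k using compositions.induct generalizing c with
  | case1 => rw [minorSum_zero, card_compositions_zero, Nat.cast_one]
  | case2 k _ => rw [minorSum_zero, card_compositions_zero, Nat.cast_one]
  | case3 m ih =>
    rw [minorSum_succ_zero, card_compositions_succ_zero, Nat.cast_sum]
    exact sum_congr rfl fun L _ => ih L _
  | case4 m k ih₁ ih₂ =>
    rw [minorSum_succ_succ, card_compositions_succ_succ, Nat.cast_add, Nat.cast_sum, ih₁]
    exact congrArg _ (sum_congr rfl fun L _ => ih₂ L _)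

theorem stmt16_general (n p k : ℕ) (hp : 0 < p) (hk : k ≤ n) :
    ∑ s ∈ Finset.univ.powersetCard (n - k),
        Matrix.det (Matrix.of (fun a b : {x : Fin n // x ∈ s} => F n p a.1 b.1)) =
      (Nat.card {l : List ℕ // l.sum = n + k * p - 2 * k ∧
          l.count (p - 1) = k ∧ ∀ x ∈ l, x = p - 1 ∨ p ≤ x} : ℤ) := by
  have hsum : n + k * p - 2 * k = (n - k) + k * (p - 1) := by
    have : k ≤ k * p := Nat.le_mul_of_pos_right k hp
    rw [Nat.mul_sub_one]
    omega
  have hminors := minorSum_eq_card_compositions p (n - k) k 0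
  rw [minorSum, show 0 + (n - k) + k = n by omega, ← range_eq_Ico] at hminors
  rw [sum_det_F_subtype_eq, hminors, ← Nat.card_eq_finsetCard]
  exact congrArg _ (Nat.card_congr (Equiv.subtypeEquivRight fun l => by
    rw [mem_compositions hp, hsum]))

/-- The sum of all principal minors of order `n - k` of `F_{n,p}` (determinants
of submatrices obtained by keeping an `(n-k)`-element set of rows and columns)
equals the number of compositions of `n + kp - 2k` with exactly `k` parts equal
to `p - 1` and all other parts `≥ p`. -/
theorem stmt16 (n p k : ℕ) (hn : 0 < n) (hp : 0 < p) (hk : k ≤ n) :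
    ∑ s ∈ Finset.univ.powersetCard (n - k),
        Matrix.det (Matrix.of (fun a b : {x : Fin n // x ∈ s} => F n p a.1 b.1)) =
      (Nat.card {l : List ℕ // l.sum = n + k * p - 2 * k ∧
          l.count (p - 1) = k ∧ ∀ x ∈ l, x = p - 1 ∨ p ≤ x} : ℤ) :=
  stmt16_general n p k hp hk
end

section
/- Let F_{n,p} be the n×n matrix with F(i,j) = -1 if i = j+1, F(i,j) = 1 if j - i ≥ p-1, else 0, and write its characteristic polynomial as sum over k of (-1)^(n-k) * a_{n-k} * x^k. Then a_{n-k} equals the number of compositions of n + kp - 2k with exactly k parts equal to p-1 and all other parts ≥ p. -/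
open Finset Polynomial Matrix

namespace Matrix

variable {R : Type*} [CommRing R] {n : ℕ}

theorem det_submatrix_succAbove_castSucc_of_hessenberg (M : Matrix (Fin (n + 1)) (Fin (n + 1)) R)
    (hlow : ∀ i j : Fin (n + 1), (j : ℕ) + 1 < i → M i j = 0)
    (hsub : ∀ j : Fin n, M j.succ j.castSucc = 1) (i : Fin (n + 1)) :
    (M.submatrix i.succAbove Fin.castSucc).det =
      (M.submatrix (Fin.castLE i.is_le') (Fin.castLE i.is_le')).det := by
  set N := M.submatrix i.succAbove Fin.castSucc
  have hN : ∀ a b : Fin n, i ≤ a.castSucc → N a b = M a.succ b.castSucc := fun a b h => by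
    simp [N, Fin.succAbove_of_le_castSucc _ _ h]
  rw [twoBlockTriangular_det N (fun a => (a : ℕ) < i)]
  · have hlead : (toSquareBlockProp N (fun a => (a : ℕ) < i)).det =
        (M.submatrix (Fin.castLE i.is_le') (Fin.castLE i.is_le')).det := by
      rw [← det_submatrix_equiv_self (Fin.castLEquiv i.is_le)]
      congr 1
      ext a b
      have ha : (Fin.castLE i.is_le a).castSucc < i := Fin.lt_def.2 a.isLt
      simp only [toSquareBlockProp_def, submatrix_apply, of_apply, Fin.castLEquiv_apply, N,
        Fin.succAbove_of_castSucc_lt _ _ ha]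
      rfl
    have htail : (toSquareBlockProp N (fun a => ¬ (a : ℕ) < i)).det = 1 := by
      rw [det_of_isUpperTriangular]
      · refine prod_eq_one fun a _ => ?_
        simp only [toSquareBlockProp_def, of_apply]
        rw [hN _ _ (Fin.le_def.2 (not_lt.1 a.2)), hsub]
      · intro a b hab
        simp only [toSquareBlockProp_def, of_apply]
        rw [hN _ _ (Fin.le_def.2 (not_lt.1 a.2))]
        apply hlow
        simp only [Fin.val_castSucc, Fin.val_succ]
        have : (b : ℕ) < a := hab
        omega
    rw [hlead, htail, mul_one]
  · intro a ha b hb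
    rw [hN a b (Fin.le_def.2 (not_lt.1 ha))]
    apply hlow
    simp only [Fin.val_castSucc, Fin.val_succ] at ha hb ⊢
    omega

theorem det_eq_sum_of_hessenberg (M : Matrix (Fin (n + 1)) (Fin (n + 1)) R)
    (hlow : ∀ i j : Fin (n + 1), (j : ℕ) + 1 < i → M i j = 0)
    (hsub : ∀ j : Fin n, M j.succ j.castSucc = 1) :
    M.det = ∑ i : Fin (n + 1), (-1) ^ (i + n : ℕ) * M i (Fin.last n) *
      (M.submatrix (Fin.castLE i.is_le') (Fin.castLE i.is_le')).det := by
  simp only [det_succ_column M (Fin.last n), Fin.succAbove_last,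
    det_submatrix_succAbove_castSucc_of_hessenberg M hlow hsub, Fin.val_last]

end Matrix

theorem charmatrix_F_apply (n p : ℕ) (i j : Fin n) :
    charmatrix (F n p) i j = (if (i : ℕ) = j then X else 0) -
      C (if (i : ℕ) = j + 1 then -1 else if (p : ℤ) - 1 ≤ (j : ℤ) - (i : ℤ) then 1 else 0) := by
  rw [charmatrix_apply, diagonal_apply]
  simp only [Fin.val_inj]
  rfl

theorem charmatrix_F_apply_last (n p : ℕ) (i : Fin (n + 1)) :
    charmatrix (F (n + 1) p) i (Fin.last n) =
      (if (i : ℕ) = n then X else 0) - if (i : ℕ) + p ≤ n + 1 then 1 else 0 := by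
  have hi := i.is_le
  have h1 : (i : ℕ) ≠ n + 1 := by omega
  have h2 : (p : ℤ) - 1 ≤ (n : ℤ) - (i : ℕ) ↔ (i : ℕ) + p ≤ n + 1 := by omega
  simp only [charmatrix_F_apply, Fin.val_last, h1, h2, if_false]
  split_ifs <;> simp

theorem charmatrix_F_submatrix_castLE {m n : ℕ} (p : ℕ) (h : m ≤ n) :
    (charmatrix (F n p)).submatrix (Fin.castLE h) (Fin.castLE h) = charmatrix (F m p) := by
  ext i j
  simp only [submatrix_apply, charmatrix_F_apply, Fin.val_castLE]

theorem charpoly_F_succ (n p : ℕ) :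
    (F (n + 1) p).charpoly = X * (F n p).charpoly -
      ∑ i ∈ range (n + 1) with i + p ≤ n + 1, (-1) ^ (i + n) * (F i p).charpoly := by
  simp only [charpoly]
  rw [det_eq_sum_of_hessenberg]
  · simp only [charmatrix_F_submatrix_castLE, charmatrix_F_apply_last]
    rw [Fin.sum_univ_eq_sum_range (fun i => (-1) ^ (i + n) *
      ((if i = n then X else 0) - if i + p ≤ n + 1 then 1 else 0) * (F i p).charmatrix.det)]
    simp only [mul_sub, sub_mul, sum_sub_distrib, mul_ite, ite_mul, mul_one, mul_zero, zero_mul,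
      sum_ite_eq', mem_range, sum_filter]
    rw [if_pos n.lt_succ_self, ← two_mul, pow_mul, neg_one_sq, one_pow, one_mul]
  · intro i j h
    rw [charmatrix_F_apply, if_neg (by omega), if_neg (by omega), if_neg (by omega)]
    simp
  · intro j
    rw [charmatrix_F_apply, if_neg (by simp), if_pos (by simp)]
    simp

theorem disjoint_image_cons {α : Type*} {a b : α} (h : a ≠ b) (s t : Set (List α)) :
    Disjoint (List.cons a '' s) (List.cons b '' t) :=
  Set.disjoint_left.2 fun _ ⟨_, _, hl⟩ ⟨_, _, hl'⟩ => h (List.cons.inj (hl.trans hl'.symm)).1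

def partWeight (p x : ℕ) : ℕ := if x = p - 1 then 1 else x

def weightedComps (p n k : ℕ) : Set (List ℕ) :=
  {l | (l.map (partWeight p)).sum = n ∧ l.count (p - 1) = k ∧ ∀ x ∈ l, x = p - 1 ∨ p ≤ x}

theorem sum_map_partWeight_add (p : ℕ) (l : List ℕ) :
    (l.map (partWeight p)).sum + l.count (p - 1) * (p - 1) = l.sum + l.count (p - 1) := by
  induction l with
  | nil => simp
  | cons x t ih =>
    simp only [List.map_cons, List.sum_cons, List.count_cons, beq_iff_eq, partWeight]
    split_ifs with h
    · subst h; linarith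
    · linarith

variable {p : ℕ}

theorem partWeight_pos {x : ℕ} (hp : 0 < p) (hx : x = p - 1 ∨ p ≤ x) : 0 < partWeight p x := by
  unfold partWeight
  split_ifs <;> omega

theorem weightedComps_zero (hp : 0 < p) (k : ℕ) :
    weightedComps p 0 k = if k = 0 then {[]} else ∅ := by
  ext (_ | ⟨x, t⟩)
  · split_ifs <;> simp_all [weightedComps, eq_comm]
  · refine iff_of_false (fun ⟨hw, _, hl⟩ => ?_) (by split_ifs <;> simp)
    rw [List.map_cons, List.sum_cons] at hw
    have := partWeight_pos hp (hl x List.mem_cons_self)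
    omega

theorem weightedComps_succ (n k : ℕ) :
    weightedComps p (n + 1) k =
      (if k = 0 then ∅ else List.cons (p - 1) '' weightedComps p n (k - 1)) ∪
        ⋃ i ∈ (range (n + 1)).filter (· + p ≤ n + 1),
          List.cons (n + 1 - i) '' weightedComps p i k := by
  ext (_ | ⟨x, t⟩)
  · split_ifs <;> simp [weightedComps]
  · simp only [weightedComps, Set.mem_ofPred_eq, List.map_cons, List.sum_cons, List.mem_cons,
      forall_eq_or_imp, mem_filter, mem_range, Set.mem_union, Set.mem_ite_empty_left,
      Set.mem_image, List.cons.injEq, exists_eq_right_right, Set.mem_iUnion, exists_prop,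
      List.count_cons, beq_iff_eq, partWeight]
    generalize (t.map (partWeight p)).sum = w
    constructor
    · rintro ⟨hsum, hcount, hx, ht⟩
      by_cases hxp : x = p - 1
      · simp only [hxp, if_true] at hsum hcount
        exact Or.inl ⟨by omega, ⟨by omega, by omega, ht⟩, hxp.symm⟩
      · simp only [hxp, if_false] at hsum hcount
        exact Or.inr ⟨w, ⟨by omega, by omega⟩, ⟨rfl, by omega, ht⟩, by omega⟩
    · rintro (⟨hk, ⟨rfl, hc, ht⟩, rfl⟩ | ⟨i, ⟨hi, hip⟩, ⟨rfl, hc, ht⟩, rfl⟩)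
      · simp only [if_true]
        exact ⟨by omega, by omega, Or.inl trivial, ht⟩
      · simp only [show n + 1 - w ≠ p - 1 by omega, if_false]
        exact ⟨by omega, by omega, Or.inr (by omega), ht⟩

theorem weightedComps_finite (hp : 0 < p) (n k : ℕ) : (weightedComps p n k).Finite := by
  induction n using Nat.strong_induction_on generalizing k with
  | _ n ih =>
    cases n with
    | zero =>
      rw [weightedComps_zero hp]
      split_ifs
      exacts [Set.finite_singleton _, Set.finite_empty]
    | succ n =>
      rw [weightedComps_succ]
      refine .union ?_ (.biUnion (finite_toSet _) fun i hi =>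
        (ih i (mem_range.1 (mem_filter.1 hi).1) k).image _)
      split_ifs
      exacts [Set.finite_empty, (ih n n.lt_succ_self _).image _]

theorem ncard_weightedComps_succ (hp : 0 < p) (n k : ℕ) :
    (weightedComps p (n + 1) k).ncard =
      (if k = 0 then 0 else (weightedComps p n (k - 1)).ncard) +
        ∑ i ∈ range (n + 1) with i + p ≤ n + 1, (weightedComps p i k).ncard := by
  have hfin := weightedComps_finite hp (n + 1) k
  rw [weightedComps_succ] at hfin ⊢
  rw [Set.ncard_union_eq ?disj (hfin.subset Set.subset_union_left)
    (hfin.subset Set.subset_union_right), ← set_biUnion_coe,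
    Set.Finite.ncard_biUnion (finite_toSet _), finsum_mem_coe_finset]
  · congr 1
    · split_ifs
      exacts [Set.ncard_empty _, Set.ncard_image_of_injective _ List.cons_injective]
    · exact sum_congr rfl fun i _ => Set.ncard_image_of_injective _ List.cons_injective
  · exact fun i _ => (weightedComps_finite hp i k).image _
  · intro i hi j hj hij
    simp only [coe_filter, mem_range, Set.mem_ofPred_eq] at hi hj
    exact disjoint_image_cons (by omega) _ _
  · split_ifs
    · exact Set.empty_disjoint _
    · refine Set.disjoint_iUnion₂_right.2 fun i hi => disjoint_image_cons ?_ _ _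
      simp only [mem_filter, mem_range] at hi
      omega

theorem coeff_charpoly_F (hp : 0 < p) (n k : ℕ) :
    (F n p).charpoly.coeff k = (-1) ^ (n + k) * (weightedComps p n k).ncard := by
  induction n using Nat.strong_induction_on generalizing k with
  | _ n ih =>
    cases n with
    | zero =>
      rw [charpoly_isEmpty, weightedComps_zero hp, coeff_one]
      split_ifs <;> simp_all
    | succ n =>
      have hsum : (∑ i ∈ range (n + 1) with i + p ≤ n + 1,
          (-1) ^ (i + n) * (F i p).charpoly).coeff k =
          (-1) ^ (n + k) * ∑ i ∈ range (n + 1) with i + p ≤ n + 1,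
            ((weightedComps p i k).ncard : ℤ) := by
        rw [finsetSum_coeff, mul_sum]
        refine sum_congr rfl fun i hi => ?_
        have hsign : ((-1 : ℤ) ^ (i + n) * (-1) ^ (i + k)) = (-1) ^ (n + k) := by
          rw [← pow_add, show i + n + (i + k) = n + k + 2 * i by ring, pow_add, pow_mul,
            neg_one_sq, one_pow, mul_one]
        rw [show ((-1 : ℤ[X]) ^ (i + n)) = C ((-1) ^ (i + n)) by simp, coeff_C_mul,
          ih i (mem_range.1 (mem_filter.1 hi).1), ← mul_assoc, hsign]
      rw [charpoly_F_succ, coeff_sub, hsum, ncard_weightedComps_succ hp]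
      cases k with
      | zero =>
        rw [coeff_X_mul_zero, if_pos rfl, zero_add]
        push_cast
        ring
      | succ k =>
        rw [coeff_X_mul, ih n n.lt_succ_self k]
        push_cast
        ring

theorem weightedComps_eq_setOf_sum (hp : 0 < p) {n k : ℕ} (hk : k ≤ n) :
    weightedComps p n k = {l | l.sum = n + k * p - 2 * k ∧
      l.count (p - 1) = k ∧ ∀ x ∈ l, x = p - 1 ∨ p ≤ x} := by
  ext l
  have h := sum_map_partWeight_add p l
  have hkp : k ≤ k * p := Nat.le_mul_of_pos_right k hp
  simp only [weightedComps, Set.mem_ofPred_eq]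
  refine and_congr_left fun ⟨hc, _⟩ => ?_
  rw [hc, Nat.mul_sub_one] at h
  omega

theorem stmt17_general (n p k : ℕ) (hp : 0 < p) (hk : k ≤ n) :
    (F n p).charpoly.coeff k =
      (-1 : ℤ) ^ (n - k) *
        (Nat.card {l : List ℕ // l.sum = n + k * p - 2 * k ∧
            l.count (p - 1) = k ∧ ∀ x ∈ l, x = p - 1 ∨ p ≤ x} : ℤ) := by
  have hsign : (-1 : ℤ) ^ (n + k) = (-1) ^ (n - k) := by
    rw [show n + k = n - k + 2 * k by omega, pow_add, pow_mul, neg_one_sq, one_pow, mul_one]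
  rw [coeff_charpoly_F hp, hsign, weightedComps_eq_setOf_sum hp hk]
  rfl

/-- Writing the characteristic polynomial `det(xI - F_{n,p})` as
`∑ₖ (-1)^(n-k) a_{n-k} x^k`, the coefficient `a_{n-k}` equals the number of
compositions of `n + kp - 2k` with exactly `k` parts equal to `p - 1` and all
other parts `≥ p`. -/
theorem stmt17 (n p k : ℕ) (hn : 0 < n) (hp : 0 < p) (hk : k ≤ n) :
    (F n p).charpoly.coeff k =
      (-1 : ℤ) ^ (n - k) *
        (Nat.card {l : List ℕ // l.sum = n + k * p - 2 * k ∧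
            l.count (p - 1) = k ∧ ∀ x ∈ l, x = p - 1 ∨ p ≤ x} : ℤ) :=
  stmt17_general n p k hp hk
end

section
/- Let F_{n,1} be the n×n matrix with F(i,j) = -1 if i = j+1, F(i,j) = 1 if j ≥ i, else 0. The number of weak compositions of n-k with exactly k parts equal to 0 equals the sum of all principal minors of order n-k of F_{n,1}. -/
open Finset

theorem det_submatrix_F1 {n : ℕ} :
    ∀ {m : ℕ} (f : Fin (m + 1) → Fin n), StrictMono f →
      ((F1 n).submatrix f f).det =
        ∏ i : Fin m, if (f i.succ : ℕ) = f i.castSucc + 1 then 2 else 1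
  | 0, f, _ => by simp [Matrix.det_unique, F1]
  | m + 1, f, hf => by
    have hlt : ∀ {i j}, i < j → (f i : ℕ) < f j := fun h => hf h
    set A := (F1 n).submatrix f f
    have h01 : (f 0 : ℕ) < f 1 := hlt Fin.zero_lt_one
    -- Rows `f 0` and `f 1` agree on the columns `f 1, f 2, …`: both are all ones there.
    have hrow1 :
        A.submatrix (Fin.succ 0).succAbove Fin.succ = A.submatrix Fin.succ Fin.succ := by
      ext i j
      cases i using Fin.cases with
      | zero =>
        have h1j : (f 1 : ℕ) ≤ f j.succ :=
          hf.monotone (Fin.succ_le_succ_iff.mpr (Fin.zero_le j))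
        simp [A, F1]
        omega
      | succ i => rfl
    have hbelow : ∀ i : Fin m, A i.succ.succ 0 = 0 := fun i => by
      have : (f 1 : ℕ) < f i.succ.succ := hlt (Fin.succ_lt_succ_iff.mpr (Fin.succ_pos i))
      simp [A, F1]
      omega
    rw [Matrix.det_succ_column_zero, Fin.sum_univ_succ, Fin.sum_univ_succ, Fin.prod_univ_succ,
      hrow1, Fin.succAbove_zero, Matrix.submatrix_submatrix,
      det_submatrix_F1 (f ∘ Fin.succ) (hf.comp Fin.strictMono_succ)]
    simp only [hbelow, mul_zero, zero_mul, sum_const_zero, add_zero]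
    have h00 : A 0 0 = 1 := by simp [A, F1]
    have h10 : A 1 0 = if (f 1 : ℕ) = f 0 + 1 then -1 else 0 := by
      simp only [A, F1, Matrix.submatrix_apply, if_neg (show ¬ (f 1 : ℕ) ≤ f 0 by omega)]
    simp only [Fin.succ_zero_eq_one, Fin.castSucc_zero, h00, h10, Function.comp_apply,
      Fin.succ_castSucc]
    by_cases hadj : (f 1 : ℕ) = f 0 + 1
    · simp [hadj]; ring
    · simp [hadj]

def numAdjacent (S : Finset ℕ) : ℕ := #{i ∈ S | i + 1 ∈ S}

theorem numAdjacent_image_strictMono {m : ℕ} {f : Fin (m + 1) → ℕ} (hf : StrictMono f) :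
    numAdjacent (univ.image f) = #{i : Fin m | f i.succ = f i.castSucc + 1} := by
  have hlast : ∀ u, f u ≠ f (Fin.last m) + 1 := fun u => by
    have := hf.monotone (Fin.le_last u); omega
  have hsucc : ∀ i : Fin m, (∃ u, f u = f i.castSucc + 1) ↔ f i.succ = f i.castSucc + 1 := by
    refine fun i => ⟨fun ⟨u, hu⟩ => ?_, fun h => ⟨i.succ, h⟩⟩
    have hiu : i.castSucc < u := hf.lt_iff_lt.mp (by omega)
    have := hf.monotone (Fin.castSucc_lt_iff_succ_le.mp hiu)
    have := hf (Fin.castSucc_lt_succ (i := i))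
    omega
  rw [numAdjacent, filter_image, card_image_of_injective _ hf.injective, card_filter,
    card_filter, Fin.sum_univ_castSucc]
  simp [hlast, hsucc]

theorem det_principalMinor_F1 {n : ℕ} (s : Finset (Fin n)) :
    (Matrix.of fun a b : s => F1 n a.1 b.1).det = 2 ^ numAdjacent (s.map Fin.valEmbedding) := by
  rcases h : #s with _ | m
  · obtain rfl : s = ∅ := card_eq_zero.mp h
    simp [numAdjacent]
  · let g := s.orderEmbOfFin h
    have hminor : (Matrix.of fun a b : s => F1 n a.1 b.1).submatrix (s.orderIsoOfFin h)
        (s.orderIsoOfFin h) = (F1 n).submatrix g g := by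
      ext i j
      simp [g]
    have himage : univ.image (Fin.val ∘ g) = s.map Fin.valEmbedding := by
      rw [map_eq_image, ← image_image, image_orderEmbOfFin_univ]
      rfl
    rw [← Matrix.det_submatrix_equiv_self (s.orderIsoOfFin h).toEquiv, OrderIso.coe_toEquiv,
      hminor, det_submatrix_F1 g g.strictMono, prod_ite, prod_const_one, mul_one, prod_const,
      ← himage, numAdjacent_image_strictMono (Fin.val_strictMono.comp g.strictMono)]
    rfl

def weightSum (n m : ℕ) : ℕ := ∑ S ∈ (range n).powersetCard m, 2 ^ numAdjacent S

def weightSumLast (n m : ℕ) : ℕ :=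
  ∑ S ∈ (range n).powersetCard m with n - 1 ∈ S, 2 ^ numAdjacent S

theorem sum_det_principalMinor_F1 (n m : ℕ) :
    ∑ s ∈ univ.powersetCard m, (Matrix.of fun a b : s => F1 n a.1 b.1).det = weightSum n m := by
  rw [weightSum, ← Nat.Iio_eq_range, ← Fin.map_valEmbedding_univ, powersetCard_map, sum_map]
  simp [det_principalMinor_F1]

theorem numAdjacent_insert {n : ℕ} {S : Finset ℕ} (hS : ∀ x ∈ S, x < n) :
    numAdjacent (insert n S) = numAdjacent S + if n - 1 ∈ S then 1 else 0 := by
  have hn : n ∉ S := fun h => (hS n h).false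
  have hfilter : {i ∈ insert n S | i + 1 ∈ insert n S} =
      {i ∈ S | i + 1 ∈ S} ∪ {i ∈ S | i + 1 = n} := by
    ext i
    simp only [mem_filter, mem_insert, mem_union]
    constructor
    · rintro ⟨rfl | hi, h | h⟩ <;> first | omega | (have := hS _ h; omega) | tauto
    · rintro (⟨hi, h⟩ | ⟨hi, h⟩) <;> tauto
  have hpred : {i ∈ S | i + 1 = n} = {i ∈ S | n - 1 = i} :=
    filter_congr fun i hi => by have := hS i hi; omega
  rw [numAdjacent, hfilter, card_union_of_disjoint
    (disjoint_filter.mpr fun i _ h (h' : i + 1 = n) => hn (h' ▸ h)),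
    hpred, filter_eq, apply_ite card, card_singleton, card_empty]
  rfl

theorem weightSum_zero_zero : weightSum 0 0 = 1 := rfl

theorem weightSum_eq_zero {n m : ℕ} (h : n < m) : weightSum n m = 0 := by
  rw [weightSum, powersetCard_eq_empty.mpr (by rwa [card_range] : #(range n) < m), sum_empty]

theorem weightSumLast_zero (n : ℕ) : weightSumLast n 0 = 0 := by
  simp [weightSumLast]

theorem weightSum_succ (n m : ℕ) :
    weightSum (n + 1) m = weightSum n m + weightSumLast (n + 1) m := by
  have hnot : {S ∈ (range (n + 1)).powersetCard m | n ∉ S} = (range n).powersetCard m := by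
    ext S
    simp only [mem_filter, mem_powersetCard, subset_iff, mem_range]
    constructor
    · rintro ⟨⟨hS, hm⟩, hn⟩
      exact ⟨fun x hx => (Nat.lt_succ_iff.mp (hS hx)).lt_of_ne (ne_of_mem_of_not_mem hx hn), hm⟩
    · rintro ⟨hS, hm⟩
      exact ⟨⟨fun x hx => (hS hx).trans n.lt_succ_self, hm⟩, fun hn => (hS hn).false⟩
  rw [weightSum, weightSum, weightSumLast, Nat.add_sub_cancel, ← hnot,
    ← sum_filter_add_sum_filter_not _ (n ∈ ·), add_comm]

theorem weightSumLast_succ_succ (n m : ℕ) :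
    weightSumLast (n + 1) (m + 1) = weightSum n m + weightSumLast n m := by
  have hnS : ∀ {k}, ∀ S ∈ (range n).powersetCard k, n ∉ S := fun S hS h =>
    (mem_range.mp ((mem_powersetCard.mp hS).1 h)).false
  have hmem : {S ∈ (range (n + 1)).powersetCard (m + 1) | n ∈ S} =
      ((range n).powersetCard m).image (insert n) := by
    rw [range_add_one, powersetCard_succ_insert notMem_range_self, filter_union,
      filter_false_of_mem hnS, filter_true_of_mem, empty_union]
    simp only [mem_image]
    rintro _ ⟨T, -, rfl⟩
    exact mem_insert_self n T
  rw [weightSumLast, Nat.add_sub_cancel, hmem, sum_image, weightSum, weightSumLast, sum_filter,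
    ← sum_add_distrib]
  · refine sum_congr rfl fun S hS => ?_
    rw [numAdjacent_insert, pow_add]
    · split_ifs <;> ring
    · exact fun x hx => mem_range.mp ((mem_powersetCard.mp hS).1 hx)
  · intro S hS T hT h
    rw [← erase_insert (hnS S hS), ← erase_insert (hnS T hT)]
    exact congrArg (erase · n) h

theorem List.modifyHead_injective {α : Type*} {f : α → α} (hf : Function.Injective f) :
    Function.Injective (List.modifyHead f) := by
  rintro (_ | ⟨a, l⟩) (_ | ⟨b, l'⟩) h <;> simp_all [hf.eq_iff]

theorem List.modifyHead_add_one_eq_cons_iff {l t : List ℕ} {b : ℕ} :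
    l.modifyHead (· + 1) = b :: t ↔ ∃ a, b = a + 1 ∧ l = a :: t := by
  cases l <;> simp [eq_comm]

def weakCompositions (m k : ℕ) : Set (List ℕ) := {l | l.sum = m ∧ l.count 0 = k}

def posHeadWeakCompositions (m k : ℕ) : Set (List ℕ) :=
  {l ∈ weakCompositions m k | 0 < l.headD 0}

theorem weakCompositions_zero_zero : weakCompositions 0 0 = {[]} := by
  ext (_ | ⟨_ | a, t⟩) <;> simp [weakCompositions]

theorem posHeadWeakCompositions_zero (k : ℕ) : posHeadWeakCompositions 0 k = ∅ := by
  ext (_ | ⟨_ | a, t⟩) <;> simp [posHeadWeakCompositions, weakCompositions]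

theorem weakCompositions_succ_zero (m : ℕ) :
    weakCompositions (m + 1) 0 = posHeadWeakCompositions (m + 1) 0 := by
  ext (_ | ⟨_ | a, t⟩) <;> simp [posHeadWeakCompositions, weakCompositions]

theorem weakCompositions_succ_right (m k : ℕ) :
    weakCompositions m (k + 1) =
      List.cons 0 '' weakCompositions m k ∪ posHeadWeakCompositions m (k + 1) := by
  ext (_ | ⟨_ | a, t⟩) <;> simp [posHeadWeakCompositions, weakCompositions]

theorem posHeadWeakCompositions_succ (m k : ℕ) :
    posHeadWeakCompositions (m + 1) k =
      List.cons 1 '' weakCompositions m k ∪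
        List.modifyHead (· + 1) '' posHeadWeakCompositions m k := by
  ext (_ | ⟨_ | _ | a, t⟩) <;>
    simp [posHeadWeakCompositions, weakCompositions, List.modifyHead_add_one_eq_cons_iff] <;> omega

theorem encard_weakCompositions_succ_right (m k : ℕ) :
    (weakCompositions m (k + 1)).encard =
      (weakCompositions m k).encard + (posHeadWeakCompositions m (k + 1)).encard := by
  rw [weakCompositions_succ_right, Set.encard_union_eq, List.cons_injective.encard_image]
  refine Set.disjoint_left.mpr ?_
  rintro _ ⟨t, -, rfl⟩ ⟨-, h⟩
  exact h.ne rfl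

theorem encard_posHeadWeakCompositions_succ (m k : ℕ) :
    (posHeadWeakCompositions (m + 1) k).encard =
      (weakCompositions m k).encard + (posHeadWeakCompositions m k).encard := by
  rw [posHeadWeakCompositions_succ, Set.encard_union_eq, List.cons_injective.encard_image,
    (List.modifyHead_injective (add_left_injective 1)).encard_image]
  refine Set.disjoint_left.mpr ?_
  rintro _ ⟨t, -, rfl⟩ ⟨_ | ⟨a, u⟩, ⟨-, h⟩, hu⟩
  · simp at hu
  · simp at hu h
    omega

theorem encard_weakCompositions_eq_weightSum (n : ℕ) : ∀ m k, m + k = n →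
    (weakCompositions m k).encard = weightSum n m ∧
      (posHeadWeakCompositions m k).encard = weightSumLast n m := by
  induction n with
  | zero =>
    rintro m k h
    obtain ⟨rfl, rfl⟩ : m = 0 ∧ k = 0 := by omega
    simp [weakCompositions_zero_zero, posHeadWeakCompositions_zero, weightSum_zero_zero,
      weightSumLast_zero]
  | succ n ih =>
    have hpos : ∀ m k, m + k = n + 1 →
        (posHeadWeakCompositions m k).encard = weightSumLast (n + 1) m := by
      rintro (_ | m) k h
      · simp [posHeadWeakCompositions_zero, weightSumLast_zero]
      · rw [encard_posHeadWeakCompositions_succ, (ih m k (by omega)).1, (ih m k (by omega)).2,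
          weightSumLast_succ_succ, Nat.cast_add]
    refine fun m k h => ⟨?_, hpos m k h⟩
    rcases k with _ | k
    · obtain rfl : m = n + 1 := h
      rw [weakCompositions_succ_zero, hpos _ 0 rfl, weightSum_succ,
        weightSum_eq_zero n.lt_succ_self, zero_add]
    · rw [encard_weakCompositions_succ_right, (ih m k (by omega)).1, hpos m (k + 1) h,
        weightSum_succ, Nat.cast_add]

theorem stmt18_general (n k : ℕ) (hk : k ≤ n) :
    (Nat.card {l : List ℕ // l.sum = n - k ∧ l.count 0 = k} : ℤ) =
      ∑ s ∈ Finset.univ.powersetCard (n - k),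
        Matrix.det (Matrix.of (fun a b : {x : Fin n // x ∈ s} => F1 n a.1 b.1)) := by
  have hcard : Nat.card (weakCompositions (n - k) k) = weightSum n (n - k) := by
    rw [Nat.card_coe_set_eq, Set.ncard_def,
      (encard_weakCompositions_eq_weightSum n (n - k) k (Nat.sub_add_cancel hk)).1,
      ENat.toNat_natCast]
  exact (congrArg Nat.cast hcard).trans (sum_det_principalMinor_F1 n (n - k)).symm

/-- The number of weak compositions of `n - k` (lists of nonnegative integers
summing to `n - k`) with exactly `k` parts equal to `0` equals the sum of all
principal minors of order `n - k` of `F_{n,1}`. -/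
theorem stmt18 (n k : ℕ) (hn : 0 < n) (hk : k ≤ n) :
    (Nat.card {l : List ℕ // l.sum = n - k ∧ l.count 0 = k} : ℤ) =
      ∑ s ∈ Finset.univ.powersetCard (n - k),
        Matrix.det (Matrix.of (fun a b : {x : Fin n // x ∈ s} => F1 n a.1 b.1)) :=
  stmt18_general n k hk
end

section
/- Let F_{n,2} be the n×n matrix with F(i,j) = -1 if i = j+1, F(i,j) = 1 if j - i ≥ 1, else 0. For k ≤ n-2, the number of compositions of n with exactly k parts equal to 1 and all other parts ≥ 2 equals the sum of all principal minors of order n-k of F_{n,2}. -/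
open Polynomial Finset Matrix

lemma coeff_charpoly_neg_eq_sum_minors {R ι : Type*} [CommRing R] [Fintype ι] [DecidableEq ι]
    (M : Matrix ι ι R) {k : ℕ} (hk : k ≤ Fintype.card ι) :
    (-M).charpoly.coeff k = ∑ s ∈ univ.powersetCard (Fintype.card ι - k),
      (M.submatrix (Subtype.val : s → ι) Subtype.val).det := by
  have h := charpoly_coeff_eq_sum_minors (-M) _ (Nat.sub_le (Fintype.card ι) k)
  rw [Nat.sub_sub_self hk] at h
  rw [h, mul_sum]
  refine sum_congr rfl fun s hs => ?_
  rw [submatrix_neg, Pi.neg_apply, Pi.neg_apply, det_neg, Fintype.card_coe,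
    (mem_powersetCard.mp hs).2, ← mul_assoc, ← mul_pow, neg_one_mul, neg_neg, one_pow, one_mul]

lemma det_updateRow_zero_single_one {R : Type*} [CommRing R] {n : ℕ}
    (A : Matrix (Fin (n + 1)) (Fin (n + 1)) R) :
    (A.updateRow 0 (Pi.single 0 1)).det = (A.submatrix Fin.succ Fin.succ).det := by
  rw [det_succ_row_zero, Fin.sum_univ_succ, ← Fin.succAbove_zero,
    submatrix_updateRow_succAbove A _ _ 0]
  simp

section Hessenberg

variable {R : Type*} [CommRing R]

/-- `F_{n,2}` with `a` on the diagonal, so that `F2 n = hessenberg 0 n`. -/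
def hessenberg (a : R) (n : ℕ) : Matrix (Fin n) (Fin n) R :=
  Matrix.of fun i j => if i = j then a else if (i : ℕ) = j + 1 then -1 else if i < j then 1 else 0

lemma hessenberg_submatrix_succ (a : R) (n : ℕ) :
    (hessenberg a (n + 1)).submatrix Fin.succ Fin.succ = hessenberg a n := by
  ext i j
  simp [hessenberg]

lemma hessenberg_submatrix_succAbove_one (a : R) (n : ℕ) :
    (hessenberg a (n + 2)).submatrix (Fin.succAbove 1) Fin.succ =
      (hessenberg a (n + 1)).updateRow 0 1 := by
  ext i j
  cases i using Fin.cases with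
  | zero =>
    rw [submatrix_apply, Fin.succAbove_ne_zero_zero one_ne_zero]
    simp [hessenberg, (Fin.succ_ne_zero j).symm]
  | succ i =>
    rw [submatrix_apply, ← Fin.succ_zero_eq_one, Fin.succ_succAbove_succ]
    simp [hessenberg]

lemma det_hessenberg_updateRow_zero_one (a : R) (n : ℕ) :
    ((hessenberg a (n + 1)).updateRow 0 1).det =
      (hessenberg a (n + 1)).det - (a - 1) * (hessenberg a n).det := by
  have hrow : hessenberg a (n + 1) 0 = 1 + (a - 1) • Pi.single 0 1 := by
    ext j
    cases j using Fin.cases with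
    | zero => simp [hessenberg]
    | succ j => simp [hessenberg, (Fin.succ_ne_zero j).symm]
  conv_rhs => rw [← updateRow_eq_self (hessenberg a (n + 1)) 0, hrow, det_updateRow_add,
    det_updateRow_smul, det_updateRow_zero_single_one, hessenberg_submatrix_succ]
  ring

lemma det_hessenberg_add_two (a : R) (n : ℕ) :
    (hessenberg a (n + 2)).det =
      (a + 1) * (hessenberg a (n + 1)).det - (a - 1) * (hessenberg a n).det := by
  rw [det_succ_column_zero, Fin.sum_univ_succ, Fin.sum_univ_succ, Fin.succAbove_zero,
    hessenberg_submatrix_succ, Fin.succ_zero_eq_one, hessenberg_submatrix_succAbove_one,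
    det_hessenberg_updateRow_zero_one]
  simp [hessenberg]
  ring

end Hessenberg

lemma charmatrix_neg_F2 (n : ℕ) : (-F2 n).charmatrix = hessenberg X n := by
  ext i j
  simp only [charmatrix_apply, diagonal_apply, neg_apply, F2, hessenberg, of_apply]
  split_ifs <;> simp_all [Fin.ext_iff]

def compositionLists (n : ℕ) : Finset (List ℕ) :=
  (univ : Finset (Composition n)).image Composition.blocks

lemma mem_compositionLists {n : ℕ} {l : List ℕ} :
    l ∈ compositionLists n ↔ l.sum = n ∧ ∀ x ∈ l, 0 < x := by
  simp only [compositionLists, mem_image, mem_univ, true_and]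
  constructor
  · rintro ⟨c, rfl⟩
    exact ⟨c.blocks_sum, fun _ => c.blocks_pos⟩
  · rintro ⟨hsum, hpos⟩
    exact ⟨⟨l, hpos _, hsum⟩, rfl⟩

lemma compositionLists_zero : compositionLists 0 = {[]} := by
  ext (_ | ⟨a, t⟩)
  · simp [mem_compositionLists]
  · simp only [mem_compositionLists, List.sum_cons, List.mem_cons, forall_eq_or_imp,
      mem_singleton, reduceCtorEq, iff_false]
    omega

lemma sum_compositionLists_succ {M : Type*} [AddCommMonoid M] (f : List ℕ → M) (n : ℕ) :
    ∑ l ∈ compositionLists (n + 1), f l =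
      ∑ j ∈ range (n + 1), ∑ t ∈ compositionLists j, f ((n + 1 - j) :: t) := by
  rw [sum_sigma']
  symm
  refine sum_nbij' (fun p => (n + 1 - p.1) :: p.2) (fun l => ⟨n + 1 - l.headI, l.tail⟩)
    ?_ ?_ ?_ ?_ (fun _ _ => rfl)
  · rintro ⟨j, t⟩ h
    simp only [mem_sigma, mem_range, mem_compositionLists] at h ⊢
    obtain ⟨hj, hsum, hpos⟩ := h
    refine ⟨by simp [hsum]; omega, ?_⟩
    simp only [List.mem_cons, forall_eq_or_imp]
    exact ⟨by omega, hpos⟩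
  · rintro (_ | ⟨a, t⟩) h <;>
      simp only [mem_compositionLists, List.sum_cons, List.mem_cons, forall_eq_or_imp] at h
    · simp at h
    · simp only [mem_sigma, mem_range, mem_compositionLists, List.headI_cons, List.tail_cons]
      exact ⟨by omega, by omega, h.2.2⟩
  · rintro ⟨j, t⟩ h
    simp only [mem_sigma, mem_range] at h
    simp only [List.headI_cons, List.tail_cons, Sigma.mk.injEq, heq_eq_eq, and_true]
    omega
  · rintro (_ | ⟨a, t⟩) h <;>
      simp only [mem_compositionLists, List.sum_cons, List.mem_cons, forall_eq_or_imp] at h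
    · simp at h
    · simp only [List.headI_cons, List.tail_cons, List.cons.injEq, and_true]
      omega

noncomputable def compositionOnesPoly (n : ℕ) : ℤ[X] :=
  ∑ l ∈ compositionLists n, X ^ l.count 1

lemma coeff_compositionOnesPoly (n k : ℕ) :
    (compositionOnesPoly n).coeff k = #{l ∈ compositionLists n | l.count 1 = k} := by
  simp [compositionOnesPoly, coeff_X_pow, sum_boole, eq_comm]

lemma compositionOnesPoly_zero : compositionOnesPoly 0 = 1 := by
  simp [compositionOnesPoly, compositionLists_zero]

lemma compositionOnesPoly_succ (n : ℕ) :
    compositionOnesPoly (n + 1) =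
      X * compositionOnesPoly n + ∑ j ∈ range n, compositionOnesPoly j := by
  rw [compositionOnesPoly, sum_compositionLists_succ, sum_range_succ, add_comm]
  congr 1
  · rw [Nat.add_sub_cancel_left, compositionOnesPoly, mul_sum]
    simp [pow_succ, mul_comm]
  · refine sum_congr rfl fun j hj => sum_congr rfl fun t _ => ?_
    rw [List.count_cons_of_ne (by simp at hj; omega)]

lemma compositionOnesPoly_add_two (n : ℕ) :
    compositionOnesPoly (n + 2) =
      (X + 1) * compositionOnesPoly (n + 1) - (X - 1) * compositionOnesPoly n := by
  have h₁ := compositionOnesPoly_succ (n + 1)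
  rw [sum_range_succ] at h₁
  linear_combination h₁ - compositionOnesPoly_succ n

lemma det_hessenberg_X (n : ℕ) : (hessenberg (X : ℤ[X]) n).det = compositionOnesPoly n := by
  induction n using Nat.twoStepInduction with
  | zero => rw [det_isEmpty, compositionOnesPoly_zero]
  | one => simp [compositionOnesPoly_succ, compositionOnesPoly_zero, hessenberg]
  | more n ih₀ ih₁ => rw [det_hessenberg_add_two, compositionOnesPoly_add_two, ih₀, ih₁]

theorem stmt19_general (n k : ℕ) (hk : k ≤ n - 2) :
    (Nat.card {l : List ℕ // l.sum = n ∧ l.count 1 = k ∧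
        ∀ x ∈ l, x = 1 ∨ 2 ≤ x} : ℤ) =
      ∑ s ∈ Finset.univ.powersetCard (n - k),
        Matrix.det (Matrix.of (fun a b : {x : Fin n // x ∈ s} => F2 n a.1 b.1)) := by
  have hcount : Nat.card {l : List ℕ // l.sum = n ∧ l.count 1 = k ∧
      ∀ x ∈ l, x = 1 ∨ 2 ≤ x} = #{l ∈ compositionLists n | l.count 1 = k} := by
    rw [← Nat.card_eq_finsetCard]
    refine Nat.card_congr (Equiv.subtypeEquivRight fun l => ?_)
    have hpos : ∀ x : ℕ, x = 1 ∨ 2 ≤ x ↔ 0 < x := fun x => by omega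
    simp only [mem_filter, mem_compositionLists, hpos]
    tauto
  have hminors := coeff_charpoly_neg_eq_sum_minors (F2 n) (k := k) (by simp; omega)
  rw [charpoly, charmatrix_neg_F2, det_hessenberg_X, coeff_compositionOnesPoly,
    Fintype.card_fin] at hminors
  rw [hcount, hminors]
  rfl

/-- For `k ≤ n - 2`, the number of compositions of `n` with exactly `k` parts
equal to `1` and all other parts `≥ 2` equals the sum of all principal minors
of order `n - k` of `F_{n,2}`. -/
theorem stmt19 (n k : ℕ) (hn : 0 < n) (hk : k ≤ n - 2) :
    (Nat.card {l : List ℕ // l.sum = n ∧ l.count 1 = k ∧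
        ∀ x ∈ l, x = 1 ∨ 2 ≤ x} : ℤ) =
      ∑ s ∈ Finset.univ.powersetCard (n - k),
        Matrix.det (Matrix.of (fun a b : {x : Fin n // x ∈ s} => F2 n a.1 b.1)) :=
  stmt19_general n k hk
end
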